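/- arXiv:math/0606190 — 9 statements merged into one kernel-verified Lean document; each statement's English description precedes it below -/
import Mathlib

section
/- Transversal Jacobi equation (Theorem A, in a parallel trivialization, at times where the Riccati operator is nonsingular): For every Jacobi field J ∈ Λ define Y : I → E by Y(t) = P(t)(J(t)). Then Y satisfies the transversal Jacobi equation P(t)( d/dt [ s ↦ P(s)(Y'(s)) ](t) ) + P(t)(R(t)(Y(t))) + 3·A_t(A_t*(Y(t))) = 0 for all t ∈ I; that is, writing ∇⊥X(t) = P(t)(X'(t)) for the induced covariant derivative of a field with values in the orthogonal complement of V(t), one has (∇⊥)²Y + (R(t)Y)⊥ + 3 A_t A_t* Y = 0 on I. -/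
open scoped InnerProductSpace

section AuxTJE

variable {E : Type*} [NormedAddCommGroup E] [InnerProductSpace ℝ E]

lemma TJE.mem_inf_orth_eq_zero {W : Submodule ℝ E} {w : E} (h1 : w ∈ W) (h2 : w ∈ Wᗮ) :
    w = 0 := by
  have := (Submodule.mem_orthogonal W w).mp h2 w h1
  exact inner_self_eq_zero.mp this

lemma TJE.gram_isUnit {n : ℕ} {X : Fin n → E} (hX : LinearIndependent ℝ X) :
    IsUnit (Matrix.of fun i j => ⟪X i, X j⟫_ℝ) := by
  set G : Matrix (Fin n) (Fin n) ℝ := Matrix.of fun i j => ⟪X i, X j⟫_ℝ with hG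
  rw [← Matrix.mulVec_injective_iff_isUnit]
  have key : ∀ c : Fin n → ℝ, G.mulVec c = 0 → c = 0 := by
    intro c h
    set v := ∑ i, c i • X i with hv
    have hXv : ∀ i, ⟪X i, v⟫_ℝ = 0 := by
      intro i
      have : ⟪X i, v⟫_ℝ = G.mulVec c i := by
        simp only [hv, inner_sum, real_inner_smul_right, Matrix.mulVec, dotProduct,
          hG, Matrix.of_apply]
        exact Finset.sum_congr rfl fun j _ => mul_comm _ _
      rw [this, h]; rfl
    have hv0 : v = 0 := by
      have : ⟪v, v⟫_ℝ = 0 := by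
        simp only [hv, sum_inner, real_inner_smul_left]
        exact Finset.sum_eq_zero fun i _ => by rw [← hv, hXv i, mul_zero]
      exact inner_self_eq_zero.mp this
    have := Fintype.linearIndependent_iff.mp hX c (by rw [← hv, hv0])
    funext i; exact this i
  intro c d hcd
  have : G.mulVec (c - d) = 0 := by
    rw [Matrix.mulVec_sub, hcd, sub_self]
  have := key _ this
  exact sub_eq_zero.mp this

lemma TJE.contDiff_det {n : ℕ} {M : ℝ → Matrix (Fin n) (Fin n) ℝ}
    (h : ∀ i j, ContDiff ℝ (⊤ : ℕ∞) fun s => M s i j) :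
    ContDiff ℝ (⊤ : ℕ∞) fun s => (M s).det := by
  have e : (fun s => (M s).det)
      = fun s => ∑ σ : Equiv.Perm (Fin n), ((Equiv.Perm.sign σ : ℤ) : ℝ) * ∏ i, M s (σ i) i := by
    funext s
    rw [Matrix.det_apply]
    exact Finset.sum_congr rfl fun σ _ => by simp [Units.smul_def, zsmul_eq_mul]
  rw [e]
  exact ContDiff.sum fun σ _ => contDiff_const.mul (contDiff_prod fun i _ => h (σ i) i)

noncomputable def TJE.realInnerCLM (E : Type*) [NormedAddCommGroup E]
    [InnerProductSpace ℝ E] : E →L[ℝ] (E →L[ℝ] ℝ) :=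
  { toFun := fun u => innerSL ℝ u,
    map_add' := fun u v => by ext w; simp [inner_add_left],
    map_smul' := fun c u => by ext w; simp [inner_smul_left],
    cont := (innerSL ℝ).continuous }

lemma TJE.contDiff_innerSL_comp {f : ℝ → E} (hf : ContDiff ℝ (⊤ : ℕ∞) f) :
    ContDiff ℝ (⊤ : ℕ∞) fun s => innerSL ℝ (f s) :=
  (TJE.realInnerCLM E).contDiff.comp hf

end AuxTJE

/-- **Transversal Jacobi equation** (Theorem A of Wilking, in a parallel trivialization,
on an interval where the Riccati operator is nonsingular). -/
theorem transversal_jacobi_equation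
    {E : Type*} [NormedAddCommGroup E] [InnerProductSpace ℝ E] [FiniteDimensional ℝ E]
    (R : ℝ → (E →ₗ[ℝ] E))
    (hRsmooth : ∀ v : E, ContDiff ℝ (⊤ : ℕ∞) (fun t => R t v))
    (hRsymm : ∀ t : ℝ, (R t).IsSymmetric)
    -- Λ is a subspace of Jacobi fields
    (Λ : Submodule ℝ (ℝ → E))
    (hΛJacobi : ∀ J ∈ Λ, ContDiff ℝ (⊤ : ℕ∞) J ∧ ∀ t : ℝ, deriv (deriv J) t + R t (J t) = 0)
    -- Λ has self-adjoint Riccati operator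
    (hΛSA : ∀ J₁ ∈ Λ, ∀ J₂ ∈ Λ, ∀ t : ℝ,
      ⟪deriv J₁ t, J₂ t⟫_ℝ = ⟪J₁ t, deriv J₂ t⟫_ℝ)
    (hdim : Module.finrank ℝ Λ = Module.finrank ℝ E)
    -- I is an open interval on which the evaluation maps are isomorphisms
    (I : Set ℝ) (hIopen : IsOpen I) (hIconn : I.OrdConnected)
    (hEval : ∀ t ∈ I, Function.Bijective (fun J : Λ => (J : ℝ → E) t))
    -- the Riccati operator L
    (L : ℝ → (E →ₗ[ℝ] E))
    (hL : ∀ t ∈ I, ∀ J ∈ Λ, L t (J t) = deriv J t)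
    -- a subspace V ⊆ Λ, and P(t) the orthogonal projection onto V(t)ᗮ
    (V : Submodule ℝ (ℝ → E)) (hVΛ : V ≤ Λ)
    (P : ℝ → (E →ₗ[ℝ] E))
    (hP : ∀ t ∈ I, ∀ v : E,
      P t v ∈ (V.map (LinearMap.proj t))ᗮ ∧ v - P t v ∈ V.map (LinearMap.proj t))
    -- a Jacobi field J in Λ and its horizontal projection Y
    (J : ℝ → E) (hJ : J ∈ Λ)
    (Y : ℝ → E) (hY : ∀ t : ℝ, Y t = P t (J t)) :
    ∀ t ∈ I,
      P t (deriv (fun s => P s (deriv Y s)) t) + P t (R t (Y t))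
        + (3 : ℝ) • P t (L t (((LinearMap.id - P t : E →ₗ[ℝ] E) (L t (P t (Y t)))))) = 0 := by
  intro t₀ ht₀
  -- abbreviation for the moving subspace
  set W : ℝ → Submodule ℝ E := fun s => V.map (LinearMap.proj s) with hW
  -- basic facts about P on I
  have hPorth : ∀ s ∈ I, ∀ v : E, P s v ∈ (W s)ᗮ := fun s hs v => (hP s hs v).1
  have hPdec : ∀ s ∈ I, ∀ v : E, v - P s v ∈ W s := fun s hs v => (hP s hs v).2
  have hPW0 : ∀ s ∈ I, ∀ v ∈ W s, P s v = 0 := by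
    intro s hs v hv
    have h1 : P s v ∈ W s := by
      have he : P s v = v - (v - P s v) := by abel
      rw [he]
      exact Submodule.sub_mem _ hv (hPdec s hs v)
    exact TJE.mem_inf_orth_eq_zero h1 (hPorth s hs v)
  have hPid : ∀ s ∈ I, ∀ v ∈ (W s)ᗮ, P s v = v := by
    intro s hs v hv
    have h1 : v - P s v ∈ (W s)ᗮ := Submodule.sub_mem _ hv (hPorth s hs v)
    have h2 := TJE.mem_inf_orth_eq_zero (hPdec s hs v) h1
    have := sub_eq_zero.mp h2
    exact this.symm
  have hPP : ∀ s ∈ I, ∀ v : E, P s (P s v) = P s v :=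
    fun s hs v => hPid s hs _ (hPorth s hs v)
  have hPsym : ∀ s ∈ I, ∀ u v : E, ⟪P s u, v⟫_ℝ = ⟪u, P s v⟫_ℝ := by
    intro s hs u v
    have h1 : ⟪v - P s v, P s u⟫_ℝ = 0 :=
      (Submodule.mem_orthogonal (W s) (P s u)).mp (hPorth s hs u) _ (hPdec s hs v)
    have h2 : ⟪u - P s u, P s v⟫_ℝ = 0 :=
      (Submodule.mem_orthogonal (W s) (P s v)).mp (hPorth s hs v) _ (hPdec s hs u)
    rw [inner_sub_left] at h1 h2
    have hc : ⟪P s u, v⟫_ℝ = ⟪v, P s u⟫_ℝ := real_inner_comm _ _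
    have hc3 : ⟪P s v, P s u⟫_ℝ = ⟪P s u, P s v⟫_ℝ := real_inner_comm _ _
    linarith
  -- facts about members of Λ
  have hsm : ∀ K ∈ Λ, ContDiff ℝ (⊤ : ℕ∞) K := fun K hK => (hΛJacobi K hK).1
  have hKd : ∀ K ∈ Λ, ∀ s : ℝ, HasDerivAt K (deriv K s) s := fun K hK s =>
    (((hsm K hK).differentiable (by simp)) s).hasDerivAt
  have hK2d : ∀ K ∈ Λ, ∀ s : ℝ, HasDerivAt (deriv K) (deriv (deriv K) s) s := by
    intro K hK s
    have h1 := (contDiff_infty_iff_deriv.mp ((hsm K hK).of_le (by simp))).2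
    exact ((h1.differentiable (by simp)) s).hasDerivAt
  have hsecond : ∀ K ∈ Λ, ∀ s : ℝ, deriv (deriv K) s = - R s (K s) := fun K hK s =>
    eq_neg_of_add_eq_zero_left ((hΛJacobi K hK).2 s)
  have hderivL : ∀ s ∈ I, ∀ K ∈ Λ, deriv K s = L s (K s) := fun s hs K hK => (hL s hs K hK).symm
  have hsurj : ∀ s ∈ I, ∀ v : E, ∃ K ∈ Λ, K s = v := by
    intro s hs v
    obtain ⟨⟨K, hK⟩, hKv⟩ := (hEval s hs).2 v
    exact ⟨K, hK, hKv⟩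
  have hLsym : ∀ s ∈ I, ∀ u v : E, ⟪L s u, v⟫_ℝ = ⟪u, L s v⟫_ℝ := by
    intro s hs u v
    obtain ⟨K1, hK1, rfl⟩ := hsurj s hs u
    obtain ⟨K2, hK2, rfl⟩ := hsurj s hs v
    rw [hL s hs K1 hK1, hL s hs K2 hK2]
    exact hΛSA K1 hK1 K2 hK2 s
  -- finite dimensionality
  haveI : FiniteDimensional ℝ Λ :=
    FiniteDimensional.of_injective
      ((LinearMap.proj t₀ : (ℝ → E) →ₗ[ℝ] E).comp Λ.subtype) (hEval t₀ ht₀).injective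
  haveI : FiniteDimensional ℝ V :=
    FiniteDimensional.of_injective (Submodule.inclusion hVΛ) (Submodule.inclusion_injective hVΛ)
  -- basis of V and the associated fields
  obtain ⟨n, b⟩ : ∃ n : ℕ, Nonempty (Module.Basis (Fin n) ℝ V) :=
    ⟨Module.finrank ℝ V, ⟨Module.finBasis ℝ V⟩⟩
  obtain ⟨b⟩ := b
  set X : Fin n → ℝ → E := fun i => ((b i : ℝ → E)) with hX
  have hXV : ∀ i, X i ∈ V := fun i => (b i).2
  have hXΛ : ∀ i, X i ∈ Λ := fun i => hVΛ (hXV i)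
  have hXsm : ∀ i, ContDiff ℝ (⊤ : ℕ∞) (X i) := fun i => hsm _ (hXΛ i)
  have hXW : ∀ i, ∀ s : ℝ, X i s ∈ W s := fun i s => ⟨X i, hXV i, rfl⟩
  have hWrep : ∀ s : ℝ, ∀ w ∈ W s, ∃ c : Fin n → ℝ, w = ∑ i, c i • X i s := by
    intro s w hw
    obtain ⟨f, hf, hfw⟩ := Submodule.mem_map.mp hw
    refine ⟨fun i => b.repr ⟨f, hf⟩ i, ?_⟩
    have h := b.sum_repr ⟨f, hf⟩
    have h2 := congrArg (fun z : V => (z : ℝ → E) s) h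
    simp only [AddSubmonoidClass.coe_finset_sum, SetLike.val_smul, Finset.sum_apply,
      Pi.smul_apply] at h2
    rw [← hfw]
    exact h2.symm
  have hXind : ∀ s ∈ I, LinearIndependent ℝ (fun i => X i s) := by
    intro s hs
    refine Fintype.linearIndependent_iff.mpr fun g hg => ?_
    set u : V := ∑ i, g i • b i with hu
    have hus : (u : ℝ → E) s = 0 := by
      simp only [hu, AddSubmonoidClass.coe_finset_sum, SetLike.val_smul, Finset.sum_apply,
        Pi.smul_apply]
      exact hg
    have h0 : (⟨(u : ℝ → E), hVΛ u.2⟩ : Λ) = 0 := by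
      apply (hEval s hs).1
      simpa using hus
    have h1 : u = 0 := by
      have h2 := congrArg (fun z : Λ => (z : ℝ → E)) h0
      exact Subtype.ext (by simpa using h2)
    have h3 : ∑ i, g i • b i = (0 : V) := by rw [← hu]; exact h1
    exact fun i => Fintype.linearIndependent_iff.mp b.linearIndependent g h3 i
  -- Gram matrix
  set G : ℝ → Matrix (Fin n) (Fin n) ℝ := fun s => Matrix.of fun i j => ⟪X i s, X j s⟫_ℝ with hG
  have hGsm : ∀ i j, ContDiff ℝ (⊤ : ℕ∞) fun s => G s i j := fun i j => (hXsm i).inner ℝ (hXsm j)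
  have hGunit : ∀ s ∈ I, IsUnit (G s) := fun s hs => TJE.gram_isUnit (hXind s hs)
  set Gi : ℝ → Matrix (Fin n) (Fin n) ℝ := fun s => (G s)⁻¹ with hGi
  have hGiG : ∀ s ∈ I, Gi s * G s = 1 := fun s hs =>
    Matrix.nonsing_inv_mul _ ((Matrix.isUnit_iff_isUnit_det _).mp (hGunit s hs))
  have hGism : ∀ s ∈ I, ∀ i j, ContDiffAt ℝ (⊤ : ℕ∞) (fun s => Gi s i j) s := by
    intro s hs i j
    have hd : ContDiff ℝ (⊤ : ℕ∞) fun r => (G r).det := TJE.contDiff_det hGsm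
    have ha : ContDiff ℝ (⊤ : ℕ∞) fun r => (G r).adjugate i j := by
      have he : (fun r => (G r).adjugate i j)
          = fun r => ((G r).updateRow j (Pi.single i 1)).det :=
        funext fun r => Matrix.adjugate_apply _ i j
      rw [he]
      refine TJE.contDiff_det fun k l => ?_
      by_cases hkj : k = j
      · simp only [Matrix.updateRow_apply, hkj, if_true]
        exact contDiff_const
      · simp only [Matrix.updateRow_apply, hkj, if_false]
        exact hGsm k l
    have hne : (G s).det ≠ 0 := ((Matrix.isUnit_iff_isUnit_det _).mp (hGunit s hs)).ne_zero
    have he2 : (fun r => Gi r i j) = fun r => ((G r).det)⁻¹ * (G r).adjugate i j := by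
      funext r
      show (G r)⁻¹ i j = _
      rw [Matrix.inv_def, Matrix.smul_apply, Ring.inverse_eq_inv, smul_eq_mul]
    rw [he2]
    exact ((hd.contDiffAt.inv hne).mul ha.contDiffAt)
  -- the projection curve
  set Qc : ℝ → (E →L[ℝ] E) := fun s =>
    ∑ i, ∑ j, Gi s i j • ((innerSL ℝ (X i s)).smulRight (X j s)) with hQc
  have hQapp : ∀ s v, Qc s v = ∑ i, ∑ j, Gi s i j • (⟪X i s, v⟫_ℝ • X j s) := by
    intro s v
    rw [hQc]
    simp only [ContinuousLinearMap.sum_apply, ContinuousLinearMap.smul_apply,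
      ContinuousLinearMap.smulRight_apply, innerSL_apply_apply]
  have hQW : ∀ s : ℝ, ∀ v : E, Qc s v ∈ W s := by
    intro s v
    rw [hQapp]
    exact Submodule.sum_mem _ fun i _ => Submodule.sum_mem _ fun j _ =>
      Submodule.smul_mem _ _ (Submodule.smul_mem _ _ (hXW j s))
  have hQsmooth : ContDiffOn ℝ (⊤ : ℕ∞) Qc I := by
    intro s hs
    apply ContDiffAt.contDiffWithinAt
    rw [hQc]
    refine ContDiffAt.sum fun i _ => ContDiffAt.sum fun j _ => ?_
    exact (hGism s hs i j).smul
      (((TJE.contDiff_innerSL_comp (hXsm i)).smulRight (hXsm j)).contDiffAt)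
  have hQP : ∀ s ∈ I, ∀ v : E, Qc s v = v - P s v := by
    intro s hs v
    have hq : Qc s v ∈ W s := hQW s v
    have hinner : ∀ k, ⟪X k s, Qc s v⟫_ℝ = ⟪X k s, v⟫_ℝ := by
      intro k
      rw [hQapp]
      simp only [inner_sum, real_inner_smul_right]
      have hGG := hGiG s hs
      have h1 : ∀ i, ∑ j, Gi s i j * (⟪X i s, v⟫_ℝ * ⟪X k s, X j s⟫_ℝ)
          = ⟪X i s, v⟫_ℝ * (1 : Matrix (Fin n) (Fin n) ℝ) i k := by
        intro i
        rw [← hGG, Matrix.mul_apply, Finset.mul_sum]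
        refine Finset.sum_congr rfl fun j _ => ?_
        have h2 : ⟪X k s, X j s⟫_ℝ = G s j k := by
          show _ = ⟪X j s, X k s⟫_ℝ
          exact real_inner_comm _ _
        rw [h2]
        ring
      rw [Finset.sum_congr rfl fun i _ => h1 i]
      simp [Matrix.one_apply]
    have hperp : v - Qc s v ∈ (W s)ᗮ := by
      rw [Submodule.mem_orthogonal]
      intro w hw
      obtain ⟨c, rfl⟩ := hWrep s w hw
      rw [sum_inner]
      refine Finset.sum_eq_zero fun k _ => ?_
      rw [real_inner_smul_left, inner_sub_right, hinner k]
      ring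
    have h0 : Qc s v - (v - P s v) = 0 := by
      apply TJE.mem_inf_orth_eq_zero (h1 := Submodule.sub_mem _ hq (hPdec s hs v))
      have he : Qc s v - (v - P s v) = P s v - (v - Qc s v) := by abel
      rw [he]
      exact Submodule.sub_mem _ (hPorth s hs v) hperp
    exact sub_eq_zero.mp h0
  have hPQ0 : ∀ s ∈ I, ∀ v : E, P s (Qc s v) = 0 := fun s hs v => hPW0 s hs _ (hQW s v)
  have hQP0 : ∀ s ∈ I, ∀ v : E, Qc s (P s v) = 0 := by
    intro s hs v; rw [hQP s hs, hPP s hs, sub_self]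
  have hQQ : ∀ s ∈ I, ∀ v : E, Qc s (Qc s v) = Qc s v := by
    intro s hs v; rw [hQP s hs (Qc s v), hPQ0 s hs, sub_zero]
  have hQsym : ∀ s ∈ I, ∀ u v : E, ⟪Qc s u, v⟫_ℝ = ⟪u, Qc s v⟫_ℝ := by
    intro s hs u v
    rw [hQP s hs, hQP s hs, inner_sub_left, inner_sub_right, hPsym s hs]
  have hPeq : ∀ s ∈ I, ∀ v : E, P s v = v - Qc s v := by
    intro s hs v; rw [hQP s hs]; abel
  -- derivative of the projection curve
  set D : ℝ → (E →L[ℝ] E) := deriv Qc with hD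
  have hQhd : ∀ s ∈ I, HasDerivAt Qc (D s) s := by
    intro s hs
    exact ((hQsmooth.contDiffAt (hIopen.mem_nhds hs)).differentiableAt (by simp)).hasDerivAt
  have hDsm : ContDiffOn ℝ (⊤ : ℕ∞) D I := hQsmooth.deriv_of_isOpen hIopen (by simp)
  have hDhd : HasDerivAt D (deriv D t₀) t₀ :=
    ((hDsm.contDiffAt (hIopen.mem_nhds ht₀)).differentiableAt (by simp)).hasDerivAt
  set D2 : E →L[ℝ] E := deriv D t₀ with hD2
  -- derivative identities
  have hDonV : ∀ K ∈ V, ∀ s ∈ I, D s (K s) = deriv K s - Qc s (deriv K s) := by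
    intro K hK s hs
    have h1 : HasDerivAt (fun r => Qc r (K r)) (D s (K s) + Qc s (deriv K s)) s :=
      (hQhd s hs).clm_apply (hKd K (hVΛ hK) s)
    have h2 : (fun r => Qc r (K r)) =ᶠ[nhds s] K := by
      filter_upwards [hIopen.mem_nhds hs] with r hr
      have hm : K r ∈ W r := ⟨K, hK, rfl⟩
      rw [hQP r hr, hPW0 r hr _ hm, sub_zero]
    have h3 : HasDerivAt K (D s (K s) + Qc s (deriv K s)) s :=
      h1.congr_of_eventuallyEq h2.symm
    have h4 := h3.unique (hKd K (hVΛ hK) s)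
    exact eq_sub_of_add_eq h4
  have hDsplit : ∀ s ∈ I, ∀ v : E, D s v = D s (Qc s v) + Qc s (D s v) := by
    intro s hs v
    have h1 : HasDerivAt (fun r => (Qc r).comp (Qc r)) ((D s).comp (Qc s) + (Qc s).comp (D s)) s :=
      (hQhd s hs).clm_comp (hQhd s hs)
    have h2 : (fun r => (Qc r).comp (Qc r)) =ᶠ[nhds s] Qc := by
      filter_upwards [hIopen.mem_nhds hs] with r hr
      exact ContinuousLinearMap.ext fun w => hQQ r hr w
    have h3 := (h1.congr_of_eventuallyEq h2.symm).unique (hQhd s hs)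
    have h4 := congrArg (fun T : E →L[ℝ] E => T v) h3
    simp only [ContinuousLinearMap.add_apply, ContinuousLinearMap.comp_apply] at h4
    exact h4.symm
  have hDsym : ∀ s ∈ I, ∀ u v : E, ⟪D s u, v⟫_ℝ = ⟪u, D s v⟫_ℝ := by
    intro s hs u v
    have h1 : HasDerivAt (fun r => Qc r u) (D s u) s := by
      have h := (hQhd s hs).clm_apply (hasDerivAt_const s u)
      simpa using h
    have h2 : HasDerivAt (fun r => Qc r v) (D s v) s := by
      have h := (hQhd s hs).clm_apply (hasDerivAt_const s v)
      simpa using h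
    have h3 : HasDerivAt (fun r => ⟪Qc r u, v⟫_ℝ - ⟪u, Qc r v⟫_ℝ)
        ((⟪Qc s u, (0:E)⟫_ℝ + ⟪D s u, v⟫_ℝ) - (⟪u, D s v⟫_ℝ + ⟪(0:E), Qc s v⟫_ℝ)) s :=
      (h1.inner ℝ (hasDerivAt_const s v)).sub ((hasDerivAt_const s u).inner ℝ h2)
    have h4 : (fun r => ⟪Qc r u, v⟫_ℝ - ⟪u, Qc r v⟫_ℝ) =ᶠ[nhds s] fun _ => (0:ℝ) := by
      filter_upwards [hIopen.mem_nhds hs] with r hr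
      rw [hQsym r hr, sub_self]
    have h5 := (h3.congr_of_eventuallyEq h4.symm).unique (hasDerivAt_const s (0:ℝ))
    simp only [inner_zero_right, inner_zero_left, zero_add, add_zero] at h5
    linarith [h5]
  have hPDW : ∀ s ∈ I, ∀ w ∈ W s, P s (D s w) = P s (L s w) := by
    intro s hs w hw
    obtain ⟨K, hK, hKw⟩ := Submodule.mem_map.mp hw
    have hKw' : K s = w := hKw
    subst hKw'
    rw [hDonV K hK s hs, map_sub, hPQ0 s hs, sub_zero, hderivL s hs K (hVΛ hK)]
  have hPDP : ∀ s ∈ I, ∀ v : E, P s (D s (P s v)) = 0 := by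
    intro s hs v
    have h1 := hDsplit s hs (P s v)
    rw [hQP0 s hs v, map_zero, zero_add] at h1
    rw [h1, hPQ0 s hs]
  have hPDQ : ∀ s ∈ I, ∀ v : E, P s (D s v) = P s (L s (Qc s v)) := by
    intro s hs v
    have hv : v = Qc s v + P s v := by rw [hQP s hs]; abel
    have h1 : P s (D s v) = P s (D s (Qc s v)) + P s (D s (P s v)) := by
      conv_lhs => rw [hv]
      rw [map_add, map_add]
    rw [h1, hPDP s hs, add_zero, hPDW s hs _ (hQW s v)]
  have hDP : ∀ s ∈ I, ∀ v : E, D s (P s v) = Qc s (L s (P s v)) := by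
    intro s hs v
    apply ext_inner_right ℝ
    intro u
    calc ⟪D s (P s v), u⟫_ℝ = ⟪P s v, D s u⟫_ℝ := hDsym s hs _ _
      _ = ⟪v, P s (D s u)⟫_ℝ := hPsym s hs v (D s u)
      _ = ⟪v, P s (L s (Qc s u))⟫_ℝ := by rw [hPDQ s hs u]
      _ = ⟪P s v, L s (Qc s u)⟫_ℝ := (hPsym s hs v _).symm
      _ = ⟪L s (P s v), Qc s u⟫_ℝ := (hLsym s hs _ _).symm
      _ = ⟪Qc s (L s (P s v)), u⟫_ℝ := (hQsym s hs _ _).symm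
  have hPD2W : ∀ w ∈ W t₀,
      P t₀ (D2 w) = - P t₀ (R t₀ w) - (2:ℝ) • P t₀ (L t₀ (Qc t₀ (L t₀ w))) := by
    intro w hw
    obtain ⟨K, hK, hKw⟩ := Submodule.mem_map.mp hw
    have hKw' : K t₀ = w := hKw
    subst hKw'
    have h1 : HasDerivAt (fun r => D r (K r)) (D2 (K t₀) + D t₀ (deriv K t₀)) t₀ :=
      hDhd.clm_apply (hKd K (hVΛ hK) t₀)
    have h2 : HasDerivAt (fun r => deriv K r - Qc r (deriv K r))
        (deriv (deriv K) t₀ - (D t₀ (deriv K t₀) + Qc t₀ (deriv (deriv K) t₀))) t₀ :=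
      (hK2d K (hVΛ hK) t₀).sub ((hQhd t₀ ht₀).clm_apply (hK2d K (hVΛ hK) t₀))
    have h3 : (fun r => D r (K r)) =ᶠ[nhds t₀] (fun r => deriv K r - Qc r (deriv K r)) := by
      filter_upwards [hIopen.mem_nhds ht₀] with r hr
      exact hDonV K hK r hr
    have h5 := (h2.congr_of_eventuallyEq h3).unique h1
    have h6 : D2 (K t₀) = deriv (deriv K) t₀ - Qc t₀ (deriv (deriv K) t₀)
        - D t₀ (deriv K t₀) - D t₀ (deriv K t₀) := by
      have h6' := eq_sub_of_add_eq h5.symm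
      rw [h6']; abel
    have h7 : P t₀ (D2 (K t₀)) = P t₀ (deriv (deriv K) t₀)
        - P t₀ (D t₀ (deriv K t₀)) - P t₀ (D t₀ (deriv K t₀)) := by
      rw [h6, map_sub, map_sub, map_sub, hPQ0 t₀ ht₀, sub_zero]
    rw [h7, hsecond K (hVΛ hK) t₀, hPDQ t₀ ht₀, hderivL t₀ ht₀ K (hVΛ hK), map_neg, two_smul]
    abel
  have hPD2P : ∀ v : E,
      P t₀ (D2 (P t₀ v)) = (2:ℝ) • P t₀ (L t₀ (Qc t₀ (L t₀ (P t₀ v)))) := by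
    intro v
    have h1 : HasDerivAt (fun r => (D r).comp (Qc r) + (Qc r).comp (D r))
        ((D2.comp (Qc t₀) + (D t₀).comp (D t₀)) + ((D t₀).comp (D t₀) + (Qc t₀).comp D2)) t₀ :=
      (hDhd.clm_comp (hQhd t₀ ht₀)).add ((hQhd t₀ ht₀).clm_comp hDhd)
    have h2 : D =ᶠ[nhds t₀] (fun r => (D r).comp (Qc r) + (Qc r).comp (D r)) := by
      filter_upwards [hIopen.mem_nhds ht₀] with r hr
      exact ContinuousLinearMap.ext fun w => by
        have := hDsplit r hr w
        simpa [ContinuousLinearMap.add_apply, ContinuousLinearMap.comp_apply] using this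
    have h3 := (h1.congr_of_eventuallyEq h2).unique hDhd
    have h4 := congrArg (fun T : E →L[ℝ] E => T (P t₀ v)) h3
    simp only [ContinuousLinearMap.add_apply, ContinuousLinearMap.comp_apply] at h4
    rw [hQP0 t₀ ht₀, map_zero, zero_add] at h4
    have h5 : P t₀ (D2 (P t₀ v)) = P t₀ (D t₀ (D t₀ (P t₀ v))) + P t₀ (D t₀ (D t₀ (P t₀ v))) := by
      conv_lhs => rw [← h4]
      rw [map_add, map_add, hPQ0 t₀ ht₀, add_zero]
    have h6 : P t₀ (D t₀ (D t₀ (P t₀ v))) = P t₀ (L t₀ (Qc t₀ (L t₀ (P t₀ v)))) := by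
      rw [hPDQ t₀ ht₀, hDP t₀ ht₀, hQQ t₀ ht₀]
    rw [h5, h6, two_smul]
  -- the function Y and its derivatives
  have hYev : ∀ s ∈ I, Y s = J s - Qc s (J s) := by
    intro s hs; rw [hY s, hPeq s hs]
  have hYd : ∀ s ∈ I, HasDerivAt Y (deriv J s - (D s (J s) + Qc s (deriv J s))) s := by
    intro s hs
    have h1 : HasDerivAt (fun r => J r - Qc r (J r))
        (deriv J s - (D s (J s) + Qc s (deriv J s))) s :=
      (hKd J hJ s).sub ((hQhd s hs).clm_apply (hKd J hJ s))
    apply h1.congr_of_eventuallyEq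
    filter_upwards [hIopen.mem_nhds hs] with r hr
    exact hYev r hr
  have hY' : ∀ s ∈ I, deriv Y s = deriv J s - (D s (J s) + Qc s (deriv J s)) :=
    fun s hs => (hYd s hs).deriv
  have hgI : ∀ s ∈ I, P s (deriv Y s)
      = deriv J s - D s (J s) - Qc s (deriv J s) + Qc s (D s (J s)) := by
    intro s hs
    rw [hPeq s hs, hY' s hs, map_sub (Qc s), map_add (Qc s), hQQ s hs (deriv J s)]
    abel
  have hgd : deriv (fun s => P s (deriv Y s)) t₀
      = deriv (deriv J) t₀ - (D2 (J t₀) + D t₀ (deriv J t₀))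
        - (D t₀ (deriv J t₀) + Qc t₀ (deriv (deriv J) t₀))
        + (D t₀ (D t₀ (J t₀)) + Qc t₀ (D2 (J t₀) + D t₀ (deriv J t₀))) := by
    have h1 : HasDerivAt
        (fun s => deriv J s - D s (J s) - Qc s (deriv J s) + Qc s (D s (J s)))
        (deriv (deriv J) t₀ - (D2 (J t₀) + D t₀ (deriv J t₀))
          - (D t₀ (deriv J t₀) + Qc t₀ (deriv (deriv J) t₀))
          + (D t₀ (D t₀ (J t₀)) + Qc t₀ (D2 (J t₀) + D t₀ (deriv J t₀)))) t₀ :=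
      (((hK2d J hJ t₀).sub (hDhd.clm_apply (hKd J hJ t₀))).sub
          ((hQhd t₀ ht₀).clm_apply (hK2d J hJ t₀))).add
        ((hQhd t₀ ht₀).clm_apply (hDhd.clm_apply (hKd J hJ t₀)))
    have h2 : (fun s => P s (deriv Y s)) =ᶠ[nhds t₀]
        (fun s => deriv J s - D s (J s) - Qc s (deriv J s) + Qc s (D s (J s))) := by
      filter_upwards [hIopen.mem_nhds ht₀] with r hr
      exact hgI r hr
    exact (h1.congr_of_eventuallyEq h2).deriv
  -- final assembly
  have hJt : J t₀ = Qc t₀ (J t₀) + P t₀ (J t₀) := by rw [hQP t₀ ht₀]; abel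
  have hq : Qc t₀ (J t₀) ∈ W t₀ := hQW t₀ (J t₀)
  have eQ1 : P t₀ (Qc t₀ (deriv (deriv J) t₀)) = 0 := hPQ0 t₀ ht₀ _
  have eQ2 : P t₀ (Qc t₀ (D2 (J t₀) + D t₀ (deriv J t₀))) = 0 := hPQ0 t₀ ht₀ _
  have eJ'' : P t₀ (deriv (deriv J) t₀)
      = -(P t₀ (R t₀ (Qc t₀ (J t₀))) + P t₀ (R t₀ (P t₀ (J t₀)))) := by
    have h1 : P t₀ (deriv (deriv J) t₀) = - P t₀ (R t₀ (J t₀)) := by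
      rw [hsecond J hJ t₀]; simp only [map_neg]
    rw [h1]
    conv_lhs => rw [hJt, map_add (R t₀), map_add (P t₀)]
  have eD2 : P t₀ (D2 (J t₀))
      = (- P t₀ (R t₀ (Qc t₀ (J t₀)))
          - (2:ℝ) • P t₀ (L t₀ (Qc t₀ (L t₀ (Qc t₀ (J t₀))))))
        + (2:ℝ) • P t₀ (L t₀ (Qc t₀ (L t₀ (P t₀ (J t₀))))) := by
    conv_lhs => rw [hJt, map_add D2, map_add (P t₀)]
    rw [hPD2W _ hq, hPD2P (J t₀)]
  have eDJ' : P t₀ (D t₀ (deriv J t₀))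
      = P t₀ (L t₀ (Qc t₀ (L t₀ (Qc t₀ (J t₀)))))
        + P t₀ (L t₀ (Qc t₀ (L t₀ (P t₀ (J t₀))))) := by
    rw [hPDQ t₀ ht₀, hderivL t₀ ht₀ J hJ]
    conv_lhs => rw [hJt, map_add (L t₀), map_add (Qc t₀), map_add (L t₀), map_add (P t₀)]
  have eDD : P t₀ (D t₀ (D t₀ (J t₀))) = P t₀ (L t₀ (Qc t₀ (L t₀ (P t₀ (J t₀))))) := by
    rw [hPDQ t₀ ht₀]
    have hq0 : Qc t₀ (D t₀ (Qc t₀ (J t₀))) = 0 := by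
      have h := hDsplit t₀ ht₀ (Qc t₀ (J t₀))
      rw [hQQ t₀ ht₀] at h
      exact (left_eq_add.mp h)
    have hqd : Qc t₀ (D t₀ (J t₀)) = Qc t₀ (L t₀ (P t₀ (J t₀))) := by
      conv_lhs => rw [hJt, map_add (D t₀), map_add (Qc t₀)]
      rw [hq0, zero_add, hDP t₀ ht₀ (J t₀), hQQ t₀ ht₀]
    rw [hqd]
  have hYt : Y t₀ = P t₀ (J t₀) := hY t₀
  have hPY : P t₀ (Y t₀) = P t₀ (J t₀) := by rw [hYt]; exact hPP t₀ ht₀ _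
  have hid : (LinearMap.id - P t₀ : E →ₗ[ℝ] E) (L t₀ (P t₀ (J t₀)))
      = Qc t₀ (L t₀ (P t₀ (J t₀))) := by
    simp only [LinearMap.sub_apply, LinearMap.id_apply]
    exact (hQP t₀ ht₀ _).symm
  rw [hgd, hPY, hYt, hid]
  simp only [map_add, map_sub, hPQ0 t₀ ht₀]
  rw [eJ'', eD2, eDJ', eDD]
  module
end

section
/- The quotient family again has a self-adjoint Riccati operator: for all J₁, J₂ ∈ Λ, setting Y₁(t) = P(t)(J₁(t)) and Y₂(t) = P(t)(J₂(t)), one has ⟨P(t)(Y₁'(t)), Y₂(t)⟩ = ⟨Y₁(t), P(t)(Y₂'(t))⟩ for all t ∈ I; i.e. the family {P·J : J ∈ Λ} is self-adjoint with respect to the induced covariant derivative ∇⊥X(t) = P(t)(X'(t)). -/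
open scoped InnerProductSpace
open Matrix

private lemma diffAt_finset_prod {ι : Type*} {t : ℝ} (u : Finset ι) (f : ι → ℝ → ℝ)
    (h : ∀ i ∈ u, DifferentiableAt ℝ (f i) t) :
    DifferentiableAt ℝ (fun s => ∏ i ∈ u, f i s) t := by
  classical
  induction u using Finset.induction_on with
  | empty => simpa using differentiableAt_const (1 : ℝ)
  | @insert a s ha ih =>
    simp only [Finset.prod_insert ha]
    exact (h a (Finset.mem_insert_self a s)).mul
      (ih fun i hi => h i (Finset.mem_insert_of_mem hi))

private lemma diffAt_det {n : Type*} [Fintype n] [DecidableEq n] {M : ℝ → Matrix n n ℝ} {t : ℝ}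
    (h : ∀ i j, DifferentiableAt ℝ (fun s => M s i j) t) :
    DifferentiableAt ℝ (fun s => (M s).det) t := by
  simp only [Matrix.det_apply, Units.smul_def, zsmul_eq_mul]
  exact DifferentiableAt.fun_sum fun σ _ =>
    (diffAt_finset_prod _ _ fun i _ => h (σ i) i).const_mul _

private lemma diffAt_adjugate {n : Type*} [Fintype n] [DecidableEq n] {M : ℝ → Matrix n n ℝ}
    {t : ℝ} (h : ∀ i j, DifferentiableAt ℝ (fun s => M s i j) t) (i j : n) :
    DifferentiableAt ℝ (fun s => (M s).adjugate i j) t := by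
  simp only [Matrix.adjugate_apply]
  apply diffAt_det
  intro a b
  simp only [Matrix.updateRow_apply]
  by_cases hab : a = j
  · simp only [if_pos hab]; exact differentiableAt_const _
  · simp only [if_neg hab]; exact h a b

private lemma aux_proj {E : Type*} [NormedAddCommGroup E] [InnerProductSpace ℝ E]
    (K : Submodule ℝ E) (p : E →ₗ[ℝ] E) (h : ∀ v, p v ∈ Kᗮ ∧ v - p v ∈ K) :
    (∀ x ∈ K, p x = 0) ∧ (∀ u (x : E), x ∈ Kᗮ → ⟪p u, x⟫_ℝ = ⟪u, x⟫_ℝ) := by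
  constructor
  · intro x hx
    have h1 : p x ∈ K := by
      have h2 := K.sub_mem hx (h x).2
      simpa using h2
    have h3 := (Submodule.mem_orthogonal K (p x)).mp (h x).1 (p x) h1
    exact inner_self_eq_zero.mp h3
  · intro u x hx
    have h1 : ⟪u - p u, x⟫_ℝ = 0 :=
      (Submodule.mem_orthogonal K x).mp hx _ (h u).2
    rw [inner_sub_left] at h1
    linarith

/-- Key derivative computation: on `I`, `P s (J s)` differs from `J` by a curve in the moving
family `V(s)`; its derivative at `t`, after projecting by `P t`, equals
`P t (deriv J t - deriv L t)` for some `L ∈ V` with `L t = J t - P t (J t)`. -/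
private lemma key {E : Type*} [NormedAddCommGroup E] [InnerProductSpace ℝ E]
    [FiniteDimensional ℝ E]
    (Λ V : Submodule ℝ (ℝ → E)) (hVΛ : V ≤ Λ)
    (hsmooth : ∀ J ∈ Λ, ContDiff ℝ (⊤ : ℕ∞) J)
    (I : Set ℝ) (hIopen : IsOpen I)
    (hEval : ∀ t ∈ I, Function.Bijective (fun J : Λ => (J : ℝ → E) t))
    (P : ℝ → (E →ₗ[ℝ] E))
    (hP : ∀ t ∈ I, ∀ v : E,
      P t v ∈ (V.map (LinearMap.proj t))ᗮ ∧ v - P t v ∈ V.map (LinearMap.proj t))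
    (J : ℝ → E) (hJ : J ∈ Λ) (t : ℝ) (ht : t ∈ I) :
    ∃ L ∈ V, L t = J t - P t (J t) ∧
      P t (deriv (fun s => P s (J s)) t) = P t (deriv J t - deriv L t) := by
  classical
  -- finite dimensionality of Λ and V
  haveI : FiniteDimensional ℝ Λ := by
    let φ : Λ →ₗ[ℝ] E := (LinearMap.proj t).comp Λ.subtype
    have hφ : Function.Bijective φ := hEval t ht
    exact Module.Finite.equiv (LinearEquiv.ofBijective φ hφ).symm
  haveI : FiniteDimensional ℝ V := Submodule.finiteDimensional_of_le hVΛ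
  set n := Module.finrank ℝ V with hn
  let b : Module.Basis (Fin n) ℝ V := Module.finBasis ℝ V
  -- smoothness / differentiability of the basis curves and of J
  have hbs : ∀ i : Fin n, Differentiable ℝ ((b i : ℝ → E)) := fun i =>
    (hsmooth _ (hVΛ (b i).2)).differentiable (by simp)
  have hJs : Differentiable ℝ J := (hsmooth J hJ).differentiable (by simp)
  -- injectivity of evaluation on V
  have hinj : ∀ s ∈ I, ∀ v : V, (v : ℝ → E) s = 0 → v = 0 := by
    intro s hs v hv
    have h0 : (fun J : Λ => (J : ℝ → E) s) ⟨(v : ℝ → E), hVΛ v.2⟩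
        = (fun J : Λ => (J : ℝ → E) s) 0 := by simpa using hv
    have := (hEval s hs).1 h0
    exact Subtype.ext (by simpa using congrArg Subtype.val this)
  -- linear independence of evaluated basis
  have hli : ∀ s ∈ I, LinearIndependent ℝ (fun i : Fin n => (b i : ℝ → E) s) := by
    intro s hs
    have h1 : LinearIndependent ℝ (((LinearMap.proj s).comp V.subtype) ∘ fun i => b i) := by
      apply b.linearIndependent.map'
      rw [LinearMap.ker_eq_bot']
      intro v hv
      exact hinj s hs v hv
    exact h1
  -- Gram matrix
  set G : ℝ → Matrix (Fin n) (Fin n) ℝ :=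
    fun s => Matrix.of fun i j => ⟪(b i : ℝ → E) s, (b j : ℝ → E) s⟫_ℝ with hG
  have hGsym : ∀ s i j, G s i j = G s j i := fun s i j => real_inner_comm _ _
  have hdet : ∀ s ∈ I, (G s).det ≠ 0 := by
    intro s hs hd
    obtain ⟨x, hx0, hxv⟩ := (Matrix.exists_mulVec_eq_zero_iff).mpr hd
    have hz : (∑ j, x j • (b j : ℝ → E) s) = 0 := by
      rw [← inner_self_eq_zero (𝕜 := ℝ)]
      rw [sum_inner]
      have : ∀ i, ⟪x i • (b i : ℝ → E) s, ∑ j, x j • (b j : ℝ → E) s⟫_ℝ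
          = x i * ((G s) *ᵥ x) i := by
        intro i
        rw [real_inner_smul_left, inner_sum]
        congr 1
        rw [Matrix.mulVec, dotProduct]
        congr 1
        funext j
        rw [real_inner_smul_right]
        ring_nf
        rfl
      rw [Finset.sum_congr rfl fun i _ => this i]
      simp [hxv]
    exact hx0 (funext fun i => Fintype.linearIndependent_iff.mp (hli s hs) x hz i)
  -- coefficient functions
  set r : ℝ → Fin n → ℝ := fun s j => ⟪J s, (b j : ℝ → E) s⟫_ℝ with hr
  set c : ℝ → Fin n → ℝ := fun s => (G s).det⁻¹ • ((G s).adjugate *ᵥ (r s)) with hc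
  have hGc : ∀ s ∈ I, (G s) *ᵥ (c s) = r s := by
    intro s hs
    rw [hc]
    show (G s) *ᵥ ((G s).det⁻¹ • ((G s).adjugate *ᵥ (r s))) = r s
    rw [Matrix.mulVec_smul, Matrix.mulVec_mulVec, Matrix.mul_adjugate,
      Matrix.smul_mulVec, Matrix.one_mulVec, smul_smul,
      inv_mul_cancel₀ (hdet s hs), one_smul]
  -- the projection formula on I
  have hY : ∀ s ∈ I, P s (J s) = J s - ∑ i, c s i • (b i : ℝ → E) s := by
    intro s hs
    set u : E := ∑ i, c s i • (b i : ℝ → E) s with hu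
    have humem : u ∈ V.map (LinearMap.proj s) := by
      refine ⟨((∑ i, c s i • b i : V) : ℝ → E),
        Submodule.coe_mem _, ?_⟩
      show ((∑ i, c s i • b i : V) : ℝ → E) s = u
      rw [hu]
      push_cast
      simp [Finset.sum_apply]
    have hbz : ∀ j, ⟪J s - u, (b j : ℝ → E) s⟫_ℝ = 0 := by
      intro j
      rw [inner_sub_left]
      have h2 : ⟪u, (b j : ℝ → E) s⟫_ℝ = ((G s) *ᵥ (c s)) j := by
        rw [hu, sum_inner, Matrix.mulVec, dotProduct]
        refine Finset.sum_congr rfl fun i _ => ?_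
        rw [real_inner_smul_left, hGsym s j i]
        ring_nf
        rfl
      rw [h2, hGc s hs]
      simp [hr]
    have huperp : J s - u ∈ (V.map (LinearMap.proj s))ᗮ := by
      rw [Submodule.mem_orthogonal']
      rintro x ⟨v, hvV, rfl⟩
      have hvrep := b.sum_repr ⟨v, hvV⟩
      have hvs : v s = ∑ i, b.repr ⟨v, hvV⟩ i • (b i : ℝ → E) s := by
        have h3 := congrArg (fun w : V => (w : ℝ → E) s) hvrep
        simp only at h3
        rw [← h3]
        push_cast
        simp [Finset.sum_apply]
      show ⟪J s - u, v s⟫_ℝ = 0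
      rw [hvs, inner_sum]
      refine Finset.sum_eq_zero fun i _ => ?_
      rw [real_inner_smul_right, hbz i, mul_zero]
    have h1 := hP s hs (J s)
    have hd1 : (J s - u) - P s (J s) ∈ V.map (LinearMap.proj s) := by
      have h4 := Submodule.sub_mem _ h1.2 humem
      have h5 : (J s - P s (J s)) - u = (J s - u) - P s (J s) := by abel
      rwa [h5] at h4
    have hd2 : (J s - u) - P s (J s) ∈ (V.map (LinearMap.proj s))ᗮ :=
      Submodule.sub_mem _ huperp h1.1
    have h6 : (J s - u) - P s (J s) = 0 := by
      have h7 := (Submodule.mem_orthogonal' _ _).mp hd2 _ hd1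
      exact inner_self_eq_zero.mp h7
    exact (sub_eq_zero.mp h6).symm
  -- differentiability of the coefficients at t
  have hGd : ∀ i j, DifferentiableAt ℝ (fun s => G s i j) t := fun i j =>
    ((hbs i) t).inner ℝ ((hbs j) t)
  have hrd : ∀ j, DifferentiableAt ℝ (fun s => r s j) t := fun j =>
    (hJs t).inner ℝ ((hbs j) t)
  have hcd : ∀ i, DifferentiableAt ℝ (fun s => c s i) t := by
    intro i
    have h1 : DifferentiableAt ℝ (fun s => (G s).det) t := diffAt_det hGd
    have h2 : DifferentiableAt ℝ (fun s => ((G s).adjugate *ᵥ r s) i) t := by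
      have h3 : (fun s => ((G s).adjugate *ᵥ r s) i)
          = fun s => ∑ j, (G s).adjugate i j * r s j := by
        funext s
        simp [Matrix.mulVec, dotProduct]
      rw [h3]
      exact DifferentiableAt.fun_sum fun j _ => (diffAt_adjugate hGd i j).mul (hrd j)
    exact (h1.inv (hdet t ht)).mul h2
  -- derivative computations
  have hbd : ∀ i, HasDerivAt ((b i : ℝ → E)) (deriv ((b i : ℝ → E)) t) t := fun i =>
    ((hbs i) t).hasDerivAt
  have hJd : HasDerivAt J (deriv J t) t := (hJs t).hasDerivAt
  have hsum : HasDerivAt (fun s => ∑ i, c s i • (b i : ℝ → E) s)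
      (∑ i, (c t i • deriv ((b i : ℝ → E)) t
        + deriv (fun s => c s i) t • (b i : ℝ → E) t)) t :=
    HasDerivAt.fun_sum fun i _ => ((hcd i).hasDerivAt.smul (hbd i))
  have hev : (fun s => P s (J s)) =ᶠ[nhds t] (fun s => J s - ∑ i, c s i • (b i : ℝ → E) s) :=
    Filter.eventuallyEq_of_mem (hIopen.mem_nhds ht) (fun s hs => hY s hs)
  have hYd : HasDerivAt (fun s => P s (J s))
      (deriv J t - ∑ i, (c t i • deriv ((b i : ℝ → E)) t
        + deriv (fun s => c s i) t • (b i : ℝ → E) t)) t :=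
    (hJd.sub hsum).congr_of_eventuallyEq hev
  refine ⟨fun s => ∑ i, c t i • (b i : ℝ → E) s, ?_, ?_, ?_⟩
  · have h8 : (fun s => ∑ i, c t i • (b i : ℝ → E) s)
        = ∑ i, c t i • ((b i : ℝ → E)) := by
      funext s
      simp [Finset.sum_apply]
    rw [h8]
    exact Submodule.sum_mem _ fun i _ => Submodule.smul_mem _ _ (b i).2
  · rw [hY t ht, sub_sub_cancel]
  · have hLd : HasDerivAt (fun s => ∑ i, c t i • (b i : ℝ → E) s)
        (∑ i, c t i • deriv ((b i : ℝ → E)) t) t :=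
      HasDerivAt.fun_sum fun i _ => (hbd i).const_smul (c t i)
    rw [hYd.deriv, hLd.deriv]
    have hz : ∀ i, P t ((b i : ℝ → E) t) = 0 := fun i =>
      (aux_proj _ (P t) (hP t ht)).1 _ ⟨(b i : ℝ → E), (b i).2, rfl⟩
    rw [map_sub, map_sub, map_sum, map_sum]
    congr 1
    refine Finset.sum_congr rfl fun i _ => ?_
    rw [map_add, _root_.map_smul, _root_.map_smul, hz i, smul_zero, add_zero]

/-- The quotient family `{P·J : J ∈ Λ}` again has a self-adjoint Riccati operator with respect
to the induced covariant derivative `∇⊥X(t) = P(t)(X'(t))`. -/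
theorem quotient_family_selfAdjoint
    {E : Type*} [NormedAddCommGroup E] [InnerProductSpace ℝ E] [FiniteDimensional ℝ E]
    (R : ℝ → (E →ₗ[ℝ] E))
    (hRsmooth : ∀ v : E, ContDiff ℝ (⊤ : ℕ∞) (fun t => R t v))
    (hRsymm : ∀ t : ℝ, (R t).IsSymmetric)
    -- Λ is a subspace of Jacobi fields
    (Λ : Submodule ℝ (ℝ → E))
    (hΛJacobi : ∀ J ∈ Λ, ContDiff ℝ (⊤ : ℕ∞) J ∧ ∀ t : ℝ, deriv (deriv J) t + R t (J t) = 0)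
    -- Λ has self-adjoint Riccati operator
    (hΛSA : ∀ J₁ ∈ Λ, ∀ J₂ ∈ Λ, ∀ t : ℝ,
      ⟪deriv J₁ t, J₂ t⟫_ℝ = ⟪J₁ t, deriv J₂ t⟫_ℝ)
    (hdim : Module.finrank ℝ Λ = Module.finrank ℝ E)
    -- I is an open interval on which the evaluation maps are isomorphisms
    (I : Set ℝ) (hIopen : IsOpen I) (hIconn : I.OrdConnected)
    (hEval : ∀ t ∈ I, Function.Bijective (fun J : Λ => (J : ℝ → E) t))
    -- a subspace V ⊆ Λ, and P(t) the orthogonal projection onto V(t)ᗮ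
    (V : Submodule ℝ (ℝ → E)) (hVΛ : V ≤ Λ)
    (P : ℝ → (E →ₗ[ℝ] E))
    (hP : ∀ t ∈ I, ∀ v : E,
      P t v ∈ (V.map (LinearMap.proj t))ᗮ ∧ v - P t v ∈ V.map (LinearMap.proj t)) :
    ∀ J₁ ∈ Λ, ∀ J₂ ∈ Λ, ∀ t ∈ I,
      ⟪P t (deriv (fun s => P s (J₁ s)) t), P t (J₂ t)⟫_ℝ
        = ⟪P t (J₁ t), P t (deriv (fun s => P s (J₂ s)) t)⟫_ℝ := by
  intro J₁ hJ₁ J₂ hJ₂ t ht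
  have hsmooth : ∀ J ∈ Λ, ContDiff ℝ (⊤ : ℕ∞) J := fun J hJ => (hΛJacobi J hJ).1
  obtain ⟨L₁, hL₁V, hL₁t, hE₁⟩ := key Λ V hVΛ hsmooth I hIopen hEval P hP J₁ hJ₁ t ht
  obtain ⟨L₂, hL₂V, hL₂t, hE₂⟩ := key Λ V hVΛ hsmooth I hIopen hEval P hP J₂ hJ₂ t ht
  have hA₁ : J₁ - L₁ ∈ Λ := Submodule.sub_mem _ hJ₁ (hVΛ hL₁V)
  have hA₂ : J₂ - L₂ ∈ Λ := Submodule.sub_mem _ hJ₂ (hVΛ hL₂V)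
  have hd : ∀ (J L : ℝ → E), J ∈ Λ → L ∈ Λ → deriv (J - L) t = deriv J t - deriv L t := by
    intro J L hJ hL
    have h1 : DifferentiableAt ℝ J t := ((hsmooth J hJ).differentiable (by simp)) t
    have h2 : DifferentiableAt ℝ L t := ((hsmooth L hL).differentiable (by simp)) t
    exact deriv_sub h1 h2
  obtain ⟨hPzero, hPinner⟩ := aux_proj _ (P t) (hP t ht)
  have hA₁t : (J₁ - L₁) t = P t (J₁ t) := by
    show J₁ t - L₁ t = P t (J₁ t)
    rw [hL₁t]
    exact sub_sub_cancel _ _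
  have hA₂t : (J₂ - L₂) t = P t (J₂ t) := by
    show J₂ t - L₂ t = P t (J₂ t)
    rw [hL₂t]
    exact sub_sub_cancel _ _
  have hmem₁ : P t (J₁ t) ∈ (V.map (LinearMap.proj t))ᗮ := (hP t ht (J₁ t)).1
  have hmem₂ : P t (J₂ t) ∈ (V.map (LinearMap.proj t))ᗮ := (hP t ht (J₂ t)).1
  calc ⟪P t (deriv (fun s => P s (J₁ s)) t), P t (J₂ t)⟫_ℝ
      = ⟪P t (deriv J₁ t - deriv L₁ t), P t (J₂ t)⟫_ℝ := by rw [hE₁]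
    _ = ⟪deriv J₁ t - deriv L₁ t, P t (J₂ t)⟫_ℝ := hPinner _ _ hmem₂
    _ = ⟪deriv (J₁ - L₁) t, (J₂ - L₂) t⟫_ℝ := by
        rw [hd J₁ L₁ hJ₁ (hVΛ hL₁V), hA₂t]
    _ = ⟪(J₁ - L₁) t, deriv (J₂ - L₂) t⟫_ℝ := hΛSA _ hA₁ _ hA₂ t
    _ = ⟪P t (J₁ t), deriv J₂ t - deriv L₂ t⟫_ℝ := by
        rw [hd J₂ L₂ hJ₂ (hVΛ hL₂V), hA₁t]
    _ = ⟪P t (J₁ t), P t (deriv J₂ t - deriv L₂ t)⟫_ℝ :=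
        (real_inner_comm _ _).trans ((hPinner _ _ hmem₁).symm.trans (real_inner_comm _ _))
    _ = ⟪P t (J₁ t), P t (deriv (fun s => P s (J₂ s)) t)⟫_ℝ := by rw [hE₂]
end

section
/- The Riccati operator of a nonsingular self-adjoint family satisfies the Riccati equation: on I, the map t ↦ L(t) is smooth, L(t) is self-adjoint for every t ∈ I, and L'(t) + L(t) ∘ L(t) + R(t) = 0 for all t ∈ I. -/
open scoped InnerProductSpace

/-- The Riccati operator of a nonsingular self-adjoint family of Jacobi fields is smooth,
self-adjoint, and satisfies the Riccati equation `L' + L² + R = 0` on `I`. -/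
theorem riccati_equation_of_selfAdjoint_family
    {E : Type*} [NormedAddCommGroup E] [InnerProductSpace ℝ E] [FiniteDimensional ℝ E]
    (R : ℝ → (E →ₗ[ℝ] E))
    (hRsmooth : ∀ v : E, ContDiff ℝ (⊤ : ℕ∞) (fun t => R t v))
    (hRsymm : ∀ t : ℝ, (R t).IsSymmetric)
    -- Λ is a subspace of Jacobi fields
    (Λ : Submodule ℝ (ℝ → E))
    (hΛJacobi : ∀ J ∈ Λ, ContDiff ℝ (⊤ : ℕ∞) J ∧ ∀ t : ℝ, deriv (deriv J) t + R t (J t) = 0)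
    -- Λ has self-adjoint Riccati operator
    (hΛSA : ∀ J₁ ∈ Λ, ∀ J₂ ∈ Λ, ∀ t : ℝ,
      ⟪deriv J₁ t, J₂ t⟫_ℝ = ⟪J₁ t, deriv J₂ t⟫_ℝ)
    (hdim : Module.finrank ℝ Λ = Module.finrank ℝ E)
    -- I is an open interval on which the evaluation maps are isomorphisms
    (I : Set ℝ) (hIopen : IsOpen I) (hIconn : I.OrdConnected)
    (hEval : ∀ t ∈ I, Function.Bijective (fun J : Λ => (J : ℝ → E) t))
    -- the Riccati operator L
    (L : ℝ → (E →ₗ[ℝ] E))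
    (hL : ∀ t ∈ I, ∀ J ∈ Λ, L t (J t) = deriv J t) :
    (∀ v : E, ContDiffOn ℝ (⊤ : ℕ∞) (fun t => L t v) I) ∧
      (∀ t ∈ I, (L t).IsSymmetric) ∧
      (∀ t ∈ I, ∀ v : E, deriv (fun s => L s v) t + L t (L t v) + R t v = 0) := by
  -- the symmetry part is easy and does not need any construction
  have hsymm : ∀ t ∈ I, (L t).IsSymmetric := by
    intro t ht v w
    obtain ⟨J₁, hJ₁⟩ := (hEval t ht).2 v
    obtain ⟨J₂, hJ₂⟩ := (hEval t ht).2 w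
    have h1 : L t v = deriv (J₁ : ℝ → E) t := by
      rw [← hJ₁]; exact hL t ht _ J₁.2
    have h2 : L t w = deriv (J₂ : ℝ → E) t := by
      rw [← hJ₂]; exact hL t ht _ J₂.2
    rw [h1, h2, ← hJ₁, ← hJ₂]
    exact hΛSA _ J₁.2 _ J₂.2 t
  rcases I.eq_empty_or_nonempty with hIe | ⟨t₀, ht₀⟩
  · subst hIe
    refine ⟨fun v => ?_, hsymm, fun t ht => absurd ht (Set.notMem_empty t)⟩
    intro x hx; exact absurd hx (Set.notMem_empty x)
  -- evaluation maps
  set ev : ℝ → (Λ →ₗ[ℝ] E) := fun t => (LinearMap.proj t).comp Λ.subtype with hev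
  have hevapp : ∀ t (J : Λ), ev t J = (J : ℝ → E) t := fun _ _ => rfl
  set e : Λ ≃ₗ[ℝ] E := LinearEquiv.ofBijective (ev t₀) (hEval t₀ ht₀) with he
  -- the fundamental solution `B`
  set Bl : ℝ → (E →ₗ[ℝ] E) := fun t => (ev t).comp (e.symm : E →ₗ[ℝ] Λ) with hBl
  set B : ℝ → (E →L[ℝ] E) := fun t => LinearMap.toContinuousLinearMap (Bl t) with hBdef
  have hBapp : ∀ t v, B t v = ((e.symm v : Λ) : ℝ → E) t := by
    intro t v; simp [hBdef, hBl]; rfl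
  -- smoothness of B
  set bE : Module.Basis (Fin (Module.finrank ℝ E)) ℝ E := Module.finBasis ℝ E with hbE
  set g : ℝ → (Fin (Module.finrank ℝ E) → E) := fun t i => B t (bE i) with hg
  have hgsmooth : ContDiff ℝ (⊤ : ℕ∞) g := by
    rw [contDiff_pi]
    intro i
    have : (fun t => g t i) = ((e.symm (bE i) : Λ) : ℝ → E) := by
      funext t; rw [hg]; exact hBapp t (bE i)
    rw [this]
    exact (hΛJacobi _ (e.symm (bE i)).2).1
  set T : (Fin (Module.finrank ℝ E) → E) ≃ₗ[ℝ] (E →L[ℝ] E) :=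
    (bE.constr ℝ).trans LinearMap.toContinuousLinearMap with hT
  have hBT : B = fun t => T (g t) := by
    funext t
    rw [hBdef]
    show LinearMap.toContinuousLinearMap (Bl t) = LinearMap.toContinuousLinearMap (bE.constr ℝ (g t))
    congr 1
    apply bE.ext
    intro i
    rw [Module.Basis.constr_basis]
    exact (hBapp t (bE i))
  have hBsmooth : ContDiff ℝ (⊤ : ℕ∞) B := by
    rw [hBT]
    have h1 : ContDiff ℝ (⊤ : ℕ∞) (LinearMap.toContinuousLinearMap (T : (Fin (Module.finrank ℝ E) → E) →ₗ[ℝ] (E →L[ℝ] E))) :=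
      ContinuousLinearMap.contDiff _
    have := h1.comp hgsmooth
    exact this
  have hBdiff : Differentiable ℝ B := hBsmooth.differentiable (by simp)
  have hBderivsmooth : ContDiff ℝ (⊤ : ℕ∞) (deriv B) := by
    have h : ((⊤ : ℕ∞) : WithTop ℕ∞) = ((⊤ : ℕ∞) : WithTop ℕ∞) + 1 := rfl
    exact (contDiff_succ_iff_deriv.mp (by rw [← h]; exact hBsmooth)).2.2
  -- derivatives of B applied to vectors
  have hApplyDeriv : ∀ (w : E) (s : ℝ), HasDerivAt (fun u => B u w) (deriv B s w) s := by
    intro w s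
    have h1 : HasDerivAt B (deriv B s) s := (hBdiff s).hasDerivAt
    have := h1.clm_apply (hasDerivAt_const s w)
    simpa using this
  have hderivJ : ∀ (w : E) (s : ℝ),
      deriv ((e.symm w : Λ) : ℝ → E) s = deriv B s w := by
    intro w s
    have hfe : (fun u => B u w) = ((e.symm w : Λ) : ℝ → E) := funext fun u => hBapp u w
    have := hApplyDeriv w s
    rw [hfe] at this
    exact this.deriv
  -- B t is a unit for t ∈ I
  have hUnit : ∀ t ∈ I, IsUnit (B t) := by
    intro t ht
    have hbij : Function.Bijective (Bl t) := by
      have h1 : Function.Bijective (ev t) := hEval t ht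
      have h2 : Function.Bijective (e.symm : E → Λ) := e.symm.bijective
      exact h1.comp h2
    set q : E ≃ₗ[ℝ] E := LinearEquiv.ofBijective (Bl t) hbij with hq
    refine ⟨⟨B t, LinearMap.toContinuousLinearMap (q.symm : E →ₗ[ℝ] E), ?_, ?_⟩, rfl⟩
    · ext v
      show B t (LinearMap.toContinuousLinearMap (q.symm : E →ₗ[ℝ] E) v) = v
      simp only [LinearMap.coe_toContinuousLinearMap']
      show Bl t (q.symm v) = v
      exact q.apply_symm_apply v
    · ext v
      show LinearMap.toContinuousLinearMap (q.symm : E →ₗ[ℝ] E) (B t v) = v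
      simp only [LinearMap.coe_toContinuousLinearMap', hBdef]
      exact q.symm_apply_apply v
  have hInvApp : ∀ t ∈ I, ∀ v : E, B t (Ring.inverse (B t) v) = v := by
    intro t ht v
    have h := Ring.mul_inverse_cancel _ (hUnit t ht)
    have := congrArg (fun f : E →L[ℝ] E => f v) h
    simpa [ContinuousLinearMap.mul_apply] using this
  -- the continuous linear version of L
  set Lc : ℝ → (E →L[ℝ] E) := fun t => (deriv B t).comp (Ring.inverse (B t)) with hLc
  have hLcL : ∀ t ∈ I, ∀ v : E, Lc t v = L t v := by
    intro t ht v
    set w : E := Ring.inverse (B t) v with hw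
    have hJmem := (e.symm w : Λ).2
    have hJt : ((e.symm w : Λ) : ℝ → E) t = v := by
      rw [← hBapp]; exact hInvApp t ht v
    have : Lc t v = deriv B t w := rfl
    rw [this, ← hderivJ w t, ← hL t ht _ hJmem, hJt]
  have hRinvSmooth : ContDiffOn ℝ (⊤ : ℕ∞) (fun t => Ring.inverse (B t)) I := by
    intro t ht
    obtain ⟨u, hu⟩ := hUnit t ht
    have h1 : ContDiffAt ℝ (⊤ : ℕ∞) Ring.inverse (B t) := by
      rw [← hu]; exact contDiffAt_ringInverse ℝ u
    exact (h1.comp t hBsmooth.contDiffAt).contDiffWithinAt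
  have hLcSmooth : ContDiffOn ℝ (⊤ : ℕ∞) Lc I :=
    (hBderivsmooth.contDiffOn).clm_comp hRinvSmooth
  refine ⟨?_, hsymm, ?_⟩
  · intro v
    exact (hLcSmooth.clm_apply contDiffOn_const).congr fun t ht => (hLcL t ht v).symm
  · intro t ht v
    obtain ⟨J, hJt'⟩ := (hEval t ht).2 v
    have hJt : (J : ℝ → E) t = v := hJt'
    have hJmem := J.2
    have hJsmooth : ContDiff ℝ (⊤ : ℕ∞) (J : ℝ → E) := (hΛJacobi _ hJmem).1
    have hJeq := (hΛJacobi _ hJmem).2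
    have hLcAt : HasDerivAt Lc (deriv Lc t) t := by
      have := ((hLcSmooth t ht).contDiffAt (hIopen.mem_nhds ht)).differentiableAt (by simp)
      exact this.hasDerivAt
    have hJd : HasDerivAt (J : ℝ → E) (deriv (J : ℝ → E) t) t :=
      ((hJsmooth.differentiable (by simp)) t).hasDerivAt
    -- derivative of s ↦ Lc s (J s)
    have hG : HasDerivAt (fun s => Lc s ((J : ℝ → E) s))
        (deriv Lc t ((J : ℝ → E) t) + Lc t (deriv (J : ℝ → E) t)) t :=
      hLcAt.clm_apply hJd
    have hGeq : (fun s => Lc s ((J : ℝ → E) s)) =ᶠ[nhds t] deriv (J : ℝ → E) := by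
      filter_upwards [hIopen.mem_nhds ht] with s hs
      rw [hLcL s hs, hL s hs _ hJmem]
    have hG' : HasDerivAt (deriv (J : ℝ → E))
        (deriv Lc t ((J : ℝ → E) t) + Lc t (deriv (J : ℝ → E) t)) t :=
      hG.congr_of_eventuallyEq hGeq.symm
    have hkey : deriv (deriv (J : ℝ → E)) t
        = deriv Lc t v + Lc t (deriv (J : ℝ → E) t) := by
      rw [← hJt]; exact hG'.deriv
    -- derivative of s ↦ L s v
    have hv : HasDerivAt (fun s => Lc s v) (deriv Lc t v) t := by
      have := hLcAt.clm_apply (hasDerivAt_const t v)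
      simpa using this
    have hLveq : (fun s => L s v) =ᶠ[nhds t] (fun s => Lc s v) := by
      filter_upwards [hIopen.mem_nhds ht] with s hs
      exact (hLcL s hs v).symm
    have hder : deriv (fun s => L s v) t = deriv Lc t v := by
      rw [hLveq.deriv_eq]; exact hv.deriv
    -- assemble
    have hJd' : deriv (J : ℝ → E) t = L t v := by
      rw [← hJt]; exact (hL t ht _ hJmem).symm
    have hLcLL : Lc t (L t v) = L t (L t v) := hLcL t ht _
    have hJac : deriv (deriv (J : ℝ → E)) t + R t v = 0 := by
      have := hJeq t; rwa [hJt] at this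
    rw [hder]
    have : deriv Lc t v = deriv (deriv (J : ℝ → E)) t - Lc t (deriv (J : ℝ → E) t) := by
      rw [hkey]; abel
    rw [this, hJd', hLcLL]
    have h0 : deriv (deriv (J : ℝ → E)) t = -R t v := by
      have := hJac; linear_combination (norm := module) this
    rw [h0]; abel
end

section
/- Riccati comparison in nonnegative curvature (operator version, used via Eschenburg–Heintze): Suppose L : ℝ → (E →ₗ[ℝ] E) is differentiable with L(t) self-adjoint for every t ∈ ℝ, S : ℝ → (E →ₗ[ℝ] E) is such that S(t) is self-adjoint and positive semidefinite for every t ∈ ℝ, and L'(t) + L(t) ∘ L(t) + S(t) = 0 for all t ∈ ℝ. Then L(t) = 0 and S(t) = 0 for all t ∈ ℝ. -/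
open scoped InnerProductSpace

/-- Scalar Riccati comparison: a global differentiable solution of `u' ≤ -c u²` with `c > 0`
is nonpositive everywhere. -/
lemma riccati_scalar_nonpos (u : ℝ → ℝ) (hu : Differentiable ℝ u) {c : ℝ} (hc : 0 < c)
    (h : ∀ t, deriv u t ≤ -c * (u t) ^ 2) : ∀ t, u t ≤ 0 := by
  by_contra hcon
  push_neg at hcon
  obtain ⟨t0, ht0⟩ := hcon
  set a := u t0 with ha
  -- u is antitone
  have hant : Antitone u := by
    apply antitone_of_deriv_nonpos hu
    intro x
    exact (h x).trans (by nlinarith [sq_nonneg (u x)])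
  have hpos : ∀ t ≤ t0, a ≤ u t := fun t ht => hant ht
  have hupos : ∀ t ≤ t0, 0 < u t := fun t ht => lt_of_lt_of_le ht0 (hpos t ht)
  set w : ℝ → ℝ := fun t => (u t)⁻¹ with hw
  have hwderiv : ∀ t < t0, HasDerivAt w (-(deriv u t) / (u t) ^ 2) t := by
    intro t ht
    exact ((hu t).hasDerivAt).inv (ne_of_gt (hupos t ht.le))
  have hwge : ∀ t ∈ interior (Set.Iic t0), c ≤ deriv w t := by
    intro t ht
    rw [interior_Iic, Set.mem_Iio] at ht
    rw [(hwderiv t ht).deriv]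
    have h1 := h t
    have h2 : 0 < u t := hupos t ht.le
    rw [le_div_iff₀ (by positivity)]
    nlinarith
  have hwc : ContinuousOn w (Set.Iic t0) := by
    apply ContinuousOn.inv₀ hu.continuous.continuousOn
    intro t ht
    exact ne_of_gt (hupos t ht)
  have hwd : DifferentiableOn ℝ w (interior (Set.Iic t0)) := by
    intro t ht
    rw [interior_Iic, Set.mem_Iio] at ht
    exact ((hwderiv t ht).differentiableAt).differentiableWithinAt
  set t1 : ℝ := t0 - (1 / (c * a) + 1) with ht1
  have ht1le : t1 ≤ t0 := by
    have : 0 < 1 / (c * a) := by positivity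
    simp only [ht1]; linarith
  have key := (convex_Iic t0).mul_sub_le_image_sub_of_le_deriv hwc hwd hwge t1
    (Set.mem_Iic.mpr ht1le) t0 (Set.mem_Iic.mpr le_rfl) ht1le
  have hw0 : w t0 = a⁻¹ := rfl
  have hwt1 : 0 < w t1 := by
    simp only [hw]
    exact inv_pos.mpr (hupos t1 ht1le)
  have hdiff : t0 - t1 = 1 / (c * a) + 1 := by simp [ht1]
  rw [hdiff, hw0] at key
  have : c * (1 / (c * a) + 1) = a⁻¹ + c := by
    field_simp
  rw [this] at key
  nlinarith

/-- Scalar Riccati comparison, both signs: a global differentiable solution of `u' ≤ -c u²`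
with `c > 0` vanishes identically. -/
lemma riccati_scalar_zero (u : ℝ → ℝ) (hu : Differentiable ℝ u) {c : ℝ} (hc : 0 < c)
    (h : ∀ t, deriv u t ≤ -c * (u t) ^ 2) : ∀ t, u t = 0 := by
  have h1 : ∀ t, u t ≤ 0 := riccati_scalar_nonpos u hu hc h
  -- apply to g t = -u (-t)
  set g : ℝ → ℝ := fun t => -u (-t) with hg
  have hgdiff : Differentiable ℝ g := (hu.comp (differentiable_neg)).neg
  have hgderiv : ∀ t, deriv g t = deriv u (-t) := by
    intro t
    have h1 : HasDerivAt (fun s : ℝ => u (-s)) (deriv u (-t) * (-1)) t :=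
      ((hu (-t)).hasDerivAt).comp t (hasDerivAt_neg t)
    have h2 : HasDerivAt g (-(deriv u (-t) * (-1))) t := h1.neg
    rw [h2.deriv]; ring
  have h2 : ∀ t, g t ≤ 0 := by
    apply riccati_scalar_nonpos g hgdiff hc
    intro t
    rw [hgderiv t]
    have := h (-t)
    simp only [hg, neg_sq]
    linarith [h (-t)]
  intro t
  have := h2 (-t)
  simp only [hg, neg_neg] at this
  linarith [h1 t, this]

/-- **Riccati comparison in nonnegative curvature** (operator version, Eschenburg–Heintze):
a self-adjoint solution of `L' + L² + S = 0` on all of `ℝ`, with `S` self-adjoint positive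
semidefinite, must vanish identically, and then `S` vanishes as well. -/
theorem riccati_comparison_operator
    {E : Type*} [NormedAddCommGroup E] [InnerProductSpace ℝ E] [FiniteDimensional ℝ E]
    (L S : ℝ → (E →ₗ[ℝ] E))
    (hLdiff : ∀ v : E, Differentiable ℝ (fun t => L t v))
    (hLsymm : ∀ t : ℝ, (L t).IsSymmetric)
    (hSsymm : ∀ t : ℝ, (S t).IsSymmetric)
    (hSnonneg : ∀ t : ℝ, ∀ v : E, 0 ≤ ⟪S t v, v⟫_ℝ)
    (hRiccati : ∀ t : ℝ, ∀ v : E, deriv (fun s => L s v) t + L t (L t v) + S t v = 0) :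
    ∀ t : ℝ, L t = 0 ∧ S t = 0 := by
  -- quadratic form vanishes
  have hquad : ∀ (v : E) (t : ℝ), ⟪L t v, v⟫_ℝ = 0 := by
    intro v t
    rcases eq_or_ne v 0 with hv | hv
    · simp [hv]
    set u : ℝ → ℝ := fun t => ⟪L t v, v⟫_ℝ with hu
    have hud : ∀ s, HasDerivAt u ⟪deriv (fun r => L r v) s, v⟫_ℝ s := by
      intro s
      have h1 : HasDerivAt (fun r => L r v) (deriv (fun r => L r v) s) s :=
        ((hLdiff v) s).hasDerivAt
      have := h1.inner ℝ (hasDerivAt_const s v)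
      simpa using this
    have hudiff : Differentiable ℝ u := fun s => (hud s).differentiableAt
    have hvn : ‖v‖ ≠ 0 := norm_ne_zero_iff.mpr hv
    have hc : (0:ℝ) < (‖v‖ ^ 2)⁻¹ := by positivity
    have key : ∀ s, deriv u s ≤ -(‖v‖ ^ 2)⁻¹ * (u s) ^ 2 := by
      intro s
      rw [(hud s).deriv]
      have hric := hRiccati s v
      have hD : deriv (fun r => L r v) s = -(L s (L s v)) - S s v := by
        linear_combination (norm := abel) hric
      rw [hD]
      have hLL : ⟪L s (L s v), v⟫_ℝ = ‖L s v‖ ^ 2 := by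
        rw [hLsymm s (L s v) v, real_inner_self_eq_norm_sq]
      have hCS : (u s) ^ 2 ≤ ‖L s v‖ ^ 2 * ‖v‖ ^ 2 := by
        have := abs_real_inner_le_norm (L s v) v
        have h2 : |u s| ≤ ‖L s v‖ * ‖v‖ := this
        calc (u s) ^ 2 = |u s| ^ 2 := (sq_abs _).symm
          _ ≤ (‖L s v‖ * ‖v‖) ^ 2 := by
              apply sq_le_sq' <;> nlinarith [abs_nonneg (u s), norm_nonneg (L s v), norm_nonneg v]
          _ = ‖L s v‖ ^ 2 * ‖v‖ ^ 2 := by ring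
      have hS := hSnonneg s v
      rw [inner_sub_left, inner_neg_left, hLL]
      have hv2 : (0:ℝ) < ‖v‖ ^ 2 := by positivity
      have : (‖v‖ ^ 2)⁻¹ * (u s) ^ 2 ≤ ‖L s v‖ ^ 2 := by
        rw [inv_mul_le_iff₀ hv2]
        linarith [hCS]
      linarith
    exact riccati_scalar_zero u hudiff hc key t
  have hL0 : ∀ t, L t = 0 := by
    intro t
    ext x
    have hbil : ∀ y : E, ⟪L t x, y⟫_ℝ = 0 := by
      intro y
      have h1 := hquad (x + y) t
      have h2 := hquad x t
      have h3 := hquad y t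
      have hsym : ⟪L t y, x⟫_ℝ = ⟪L t x, y⟫_ℝ := by
        rw [hLsymm t y x, real_inner_comm]
      rw [map_add, inner_add_left, inner_add_right, inner_add_right] at h1
      rw [hsym] at h1
      linarith
    have := hbil (L t x)
    simp only [LinearMap.zero_apply]
    exact inner_self_eq_zero.mp (by rw [real_inner_self_eq_norm_sq] at this ⊢; exact this)
  intro t
  refine ⟨hL0 t, ?_⟩
  ext v
  have hric := hRiccati t v
  have hfun : (fun s => L s v) = fun _ => (0 : E) := by
    funext s; rw [hL0 s]; simp
  rw [hfun, deriv_const, hL0 t] at hric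
  simpa using hric
end

section
/- A nowhere vanishing self-adjoint family of Jacobi fields in nonnegative curvature is parallel: Assume Λ is a self-adjoint subspace of Jacobi fields with dim Λ = dim E, R is nonnegative, and every nonzero J ∈ Λ satisfies J(t) ≠ 0 for all t ∈ ℝ. Then every J ∈ Λ is constant (J'(t) = 0 for all t ∈ ℝ), and moreover R(t) = 0 for all t ∈ ℝ. -/
open scoped InnerProductSpace

open scoped ContDiff

open Set

lemma riccati_global_neg {n : ℝ} (hn : 0 < n) {φ : ℝ → ℝ} (hφ : Differentiable ℝ φ)
    (hineq : ∀ t, deriv φ t ≤ -(φ t) ^ 2 / n) {t₀ : ℝ} (h0 : φ t₀ < 0) : False := by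
  have hanti : Antitone φ := by
    refine antitone_of_deriv_nonpos hφ fun t => (hineq t).trans ?_
    exact div_nonpos_of_nonpos_of_nonneg (by nlinarith [sq_nonneg (φ t)]) hn.le
  have hneg : ∀ s, t₀ ≤ s → φ s < 0 := fun s hs => lt_of_le_of_lt (hanti hs) h0
  set g : ℝ → ℝ := fun s => (φ s)⁻¹ - s / n with hg
  have hder : ∀ s, t₀ ≤ s → HasDerivAt g (-(deriv φ s) / (φ s) ^ 2 - 1 / n) s := by
    intro s hs
    exact (((hφ s).hasDerivAt.inv (hneg s hs).ne)).sub ((hasDerivAt_id s).div_const n)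
  have hmono : MonotoneOn g (Ici t₀) := by
    refine monotoneOn_of_deriv_nonneg (convex_Ici t₀) ?_ ?_ ?_
    · intro s hs; exact ((hder s hs).continuousAt).continuousWithinAt
    · intro s hs
      rw [interior_Ici] at hs
      exact ((hder s (le_of_lt hs)).differentiableAt).differentiableWithinAt
    · intro s hs
      rw [interior_Ici] at hs
      rw [(hder s (le_of_lt hs)).deriv]
      have h1 := hineq s
      have h3 : deriv φ s * n ≤ -(φ s) ^ 2 := (le_div_iff₀ hn).mp h1
      have h2 : (0:ℝ) < (φ s) ^ 2 :=
        lt_of_le_of_ne (sq_nonneg _) (Ne.symm (pow_ne_zero 2 (hneg s (le_of_lt hs)).ne))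
      rw [sub_nonneg, div_le_div_iff₀ hn h2]
      nlinarith
  set s₁ : ℝ := t₀ + n * (-φ t₀)⁻¹ with hs₁
  have hpos : 0 < n * (-φ t₀)⁻¹ := mul_pos hn (inv_pos.2 (by linarith))
  have hs₁gt : t₀ ≤ s₁ := by rw [hs₁]; linarith
  have hmle : g t₀ ≤ g s₁ := hmono self_mem_Ici (mem_Ici.2 hs₁gt) hs₁gt
  have hφs₁ : (φ s₁)⁻¹ < 0 := inv_lt_zero.2 (hneg s₁ hs₁gt)
  have hc1 : s₁ - t₀ = n * (-φ t₀)⁻¹ := by rw [hs₁]; ring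
  have hc2 : (s₁ - t₀) / n = -(φ t₀)⁻¹ := by
    rw [hc1, inv_neg]
    have hd : -n / n = -1 := by rw [neg_div, div_self hn.ne']
    rw [mul_comm, mul_div_assoc, div_self hn.ne', mul_one]
  have hc3 : s₁ / n - t₀ / n = (s₁ - t₀) / n := by ring
  simp only [hg] at hmle
  linarith

lemma psd_apply_eq_zero {E : Type*} [NormedAddCommGroup E] [InnerProductSpace ℝ E]
    (S : E →ₗ[ℝ] E) (hsymm : S.IsSymmetric) (hpsd : ∀ v : E, 0 ≤ ⟪S v, v⟫_ℝ)
    {v : E} (hv : ⟪S v, v⟫_ℝ = 0) : S v = 0 := by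
  have key : ∀ w : E, ⟪S v, w⟫_ℝ = 0 := by
    intro w
    by_contra hc
    set c : ℝ := ⟪S v, w⟫_ℝ with hcdef
    set d : ℝ := ⟪S w, w⟫_ℝ with hddef
    have hq : ∀ s : ℝ, 0 ≤ 2 * s * c + d := by
      intro s
      have h0 := hpsd (s • v + w)
      have hswv : ⟪S w, v⟫_ℝ = c := by rw [hcdef, hsymm w v, real_inner_comm]
      have hexp : ⟪S (s • v + w), s • v + w⟫_ℝ
          = s ^ 2 * ⟪S v, v⟫_ℝ + s * ⟪S v, w⟫_ℝ + s * ⟪S w, v⟫_ℝ + ⟪S w, w⟫_ℝ := by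
        simp only [map_add, map_smul, inner_add_left, inner_add_right,
          real_inner_smul_left, real_inner_smul_right]
        ring
      rw [hexp, hv, hswv, ← hcdef, ← hddef] at h0
      linarith
    have hkey := hq (-(d + 1) / (2 * c))
    have hc2 : (2 : ℝ) * c ≠ 0 := by simpa using hc
    have : 2 * (-(d + 1) / (2 * c)) * c = -(d + 1) := by field_simp
    rw [this] at hkey
    have hd : 0 ≤ d := hpsd w
    linarith
  exact inner_self_eq_zero.mp (key (S v))

lemma riccati_global_zero {n : ℝ} (hn : 0 < n) {φ : ℝ → ℝ} (hφ : Differentiable ℝ φ)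
    (hineq : ∀ t, deriv φ t ≤ -(φ t) ^ 2 / n) : ∀ t, φ t = 0 := by
  intro t
  rcases lt_trichotomy (φ t) 0 with h | h | h
  · exact absurd (riccati_global_neg hn hφ hineq h) not_false
  · exact h
  · exfalso
    have hψd : Differentiable ℝ (fun s => -φ (-s)) := (hφ.comp differentiable_neg).neg
    refine riccati_global_neg hn hψd (fun s => ?_) (t₀ := -t) (by simpa using h)
    have hder : deriv (fun s => -φ (-s)) s = deriv φ (-s) := by
      rw [deriv.fun_neg, deriv_comp_neg, neg_neg]
    rw [hder]
    simpa using hineq (-s)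

set_option synthInstance.maxHeartbeats 1000000
set_option maxHeartbeats 3000000

/-- A nowhere vanishing self-adjoint full family of Jacobi fields in nonnegative curvature
consists of parallel (constant) fields, and the curvature term vanishes along the geodesic. -/
theorem nowhere_vanishing_family_is_parallel
    {E : Type*} [NormedAddCommGroup E] [InnerProductSpace ℝ E] [FiniteDimensional ℝ E]
    (R : ℝ → (E →ₗ[ℝ] E))
    (hRsmooth : ∀ v : E, ContDiff ℝ (⊤ : ℕ∞) (fun t => R t v))
    (hRsymm : ∀ t : ℝ, (R t).IsSymmetric)
    -- R is nonnegative (positive semidefinite for every t)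
    (hRnonneg : ∀ t : ℝ, ∀ v : E, 0 ≤ ⟪R t v, v⟫_ℝ)
    -- Λ is a subspace of Jacobi fields
    (Λ : Submodule ℝ (ℝ → E))
    (hΛJacobi : ∀ J ∈ Λ, ContDiff ℝ (⊤ : ℕ∞) J ∧ ∀ t : ℝ, deriv (deriv J) t + R t (J t) = 0)
    -- Λ has self-adjoint Riccati operator
    (hΛSA : ∀ J₁ ∈ Λ, ∀ J₂ ∈ Λ, ∀ t : ℝ,
      ⟪deriv J₁ t, J₂ t⟫_ℝ = ⟪J₁ t, deriv J₂ t⟫_ℝ)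
    (hdim : Module.finrank ℝ Λ = Module.finrank ℝ E)
    -- every nonzero J ∈ Λ is nowhere vanishing
    (hNowhere : ∀ J ∈ Λ, J ≠ 0 → ∀ t : ℝ, J t ≠ 0) :
    (∀ J ∈ Λ, ∀ t : ℝ, deriv J t = 0) ∧ (∀ t : ℝ, R t = 0) := by
  classical
  rcases Nat.eq_zero_or_pos (Module.finrank ℝ E) with hn0 | hnpos
  · haveI : Subsingleton E := Module.finrank_zero_iff.mp hn0
    exact ⟨fun J _ t => Subsingleton.elim _ _,
      fun t => LinearMap.ext fun v => Subsingleton.elim _ _⟩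
  set n := Module.finrank ℝ E with hn
  haveI : CompleteSpace E := FiniteDimensional.complete ℝ E
  haveI hΛfd : FiniteDimensional ℝ Λ := FiniteDimensional.of_finrank_pos (hdim ▸ hnpos)
  set b : OrthonormalBasis (Fin n) ℝ E := stdOrthonormalBasis ℝ E with hb
  set BΛ : Module.Basis (Fin n) ℝ Λ := Module.finBasisOfFinrankEq ℝ Λ hdim with hBΛ
  set Jf : Fin n → ℝ → E := fun i => ((BΛ i : Λ) : ℝ → E) with hJf
  have hJmem : ∀ i, Jf i ∈ Λ := fun i => (BΛ i).2
  have hJsmooth : ∀ i, ContDiff ℝ ∞ (Jf i) := fun i => ((hΛJacobi _ (hJmem i)).1).of_le (by simp)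
  have hJdiff : ∀ i, Differentiable ℝ (Jf i) :=
    fun i => (contDiff_infty_iff_deriv.mp (hJsmooth i)).1
  have hJdiff' : ∀ i, Differentiable ℝ (deriv (Jf i)) :=
    fun i => (contDiff_infty_iff_deriv.mp
      (contDiff_infty_iff_deriv.mp (hJsmooth i)).2).1
  -- the family of operators `P t : E →L[ℝ] E`, `x ↦ ∑ i, ⟪b i, x⟫ • Jf i t`
  set L : Fin n → E →L[ℝ] (E →L[ℝ] E) :=
    fun i => (ContinuousLinearMap.smulRightL ℝ E E) (innerSL ℝ (b i)) with hLdef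
  have hL_apply : ∀ (i) (v x : E), (L i v) x = ⟪b i, x⟫_ℝ • v := by
    intro i v x
    simp [hLdef, ContinuousLinearMap.smulRightL]
  set P : ℝ → E →L[ℝ] E := fun t => ∑ i, L i (Jf i t) with hPdef
  set P₁ : ℝ → E →L[ℝ] E := fun t => ∑ i, L i (deriv (Jf i) t) with hP₁def
  set P₂ : ℝ → E →L[ℝ] E := fun t => ∑ i, L i (deriv (deriv (Jf i)) t) with hP₂def
  have hP_apply : ∀ t x, P t x = ∑ i, ⟪b i, x⟫_ℝ • Jf i t := by
    intro t x
    simp [hPdef, ContinuousLinearMap.sum_apply, hL_apply]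
  have hP₁_apply : ∀ t x, P₁ t x = ∑ i, ⟪b i, x⟫_ℝ • deriv (Jf i) t := by
    intro t x
    simp [hP₁def, ContinuousLinearMap.sum_apply, hL_apply]
  have hPder : ∀ t, HasDerivAt P (P₁ t) t := by
    intro t
    exact HasDerivAt.fun_sum fun i _ =>
      (L i).hasFDerivAt.comp_hasDerivAt t ((hJdiff i t).hasDerivAt)
  have hP₁der : ∀ t, HasDerivAt P₁ (P₂ t) t := by
    intro t
    exact HasDerivAt.fun_sum fun i _ =>
      (L i).hasFDerivAt.comp_hasDerivAt t ((hJdiff' i t).hasDerivAt)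
  -- sums of basis elements of Λ
  have hcoe_sum : ∀ (c : Fin n → ℝ),
      (((∑ i, c i • BΛ i : Λ) : Λ) : ℝ → E) = fun s => ∑ i, c i • Jf i s := by
    intro c
    funext s
    rw [Submodule.coe_sum]
    simp [hJf]
  have hsum_deriv : ∀ (c : Fin n → ℝ) (s : ℝ),
      HasDerivAt (fun r => ∑ i, c i • Jf i r) (∑ i, c i • deriv (Jf i) s) s := by
    intro c s
    exact HasDerivAt.fun_sum fun i _ => ((hJdiff i s).hasDerivAt).const_smul (c i)
  -- recovering vectors from inner products
  have hx0 : ∀ x : E, (∀ i, ⟪b i, x⟫_ℝ = 0) → x = 0 := by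
    intro x hx
    have hs := b.sum_repr x
    rw [← hs]
    refine Finset.sum_eq_zero fun i _ => ?_
    rw [b.repr_apply_apply, hx i, zero_smul]
  -- `P t` is bijective
  have hzero : ∀ t (x : E), P t x = 0 → x = 0 := by
    intro t x hPx
    set j : Λ := ∑ i, (fun i => ⟪b i, x⟫_ℝ) i • BΛ i with hj
    have hjt : (j : ℝ → E) t = P t x := by
      rw [hj, hcoe_sum, hP_apply]
    have hj0 : (j : ℝ → E) = 0 := by
      by_contra hne
      exact hNowhere (j : ℝ → E) j.2 hne t (by rw [hjt, hPx])
    have hj0' : j = 0 := Subtype.ext hj0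
    have hcoeffs := Fintype.linearIndependent_iff.mp BΛ.linearIndependent
      (fun i => ⟪b i, x⟫_ℝ) (by rw [← hj]; exact_mod_cast hj0')
    exact hx0 x hcoeffs
  have hbij : ∀ t, Function.Bijective (P t) := by
    intro t
    have hinj : Function.Injective ((P t) : E →ₗ[ℝ] E) := by
      rw [← LinearMap.ker_eq_bot, LinearMap.ker_eq_bot']
      intro x hx
      exact hzero t x hx
    exact ⟨hinj, LinearMap.injective_iff_surjective.mp hinj⟩
  set u : ℝ → (E →L[ℝ] E)ˣ := fun t =>
    (((LinearEquiv.ofBijective ((P t) : E →ₗ[ℝ] E)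
      (hbij t)).toContinuousLinearEquiv).toUnit) with hu
  have huval : ∀ t, (u t : E →L[ℝ] E) = P t := by
    intro t
    ext x
    rfl
  have hunit : ∀ t, IsUnit (P t) := fun t => ⟨u t, huval t⟩
  set Q : ℝ → E →L[ℝ] E := fun t => Ring.inverse (P t) with hQdef
  have hPQ : ∀ t, P t * Q t = 1 := fun t => Ring.mul_inverse_cancel _ (hunit t)
  have hQP : ∀ t, Q t * P t = 1 := fun t => Ring.inverse_mul_cancel _ (hunit t)
  have hQder : ∀ t, HasDerivAt Q (-(Q t * P₁ t * Q t)) t := by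
    intro t
    have h1 : HasFDerivAt Ring.inverse
        (-ContinuousLinearMap.mulLeftRight ℝ (E →L[ℝ] E) ↑(u t)⁻¹ ↑(u t)⁻¹) (P t) := by
      rw [← huval t]
      exact hasFDerivAt_ringInverse (u t)
    have h2 := h1.comp_hasDerivAt t (hPder t)
    have h3 : Q t = ↑(u t)⁻¹ := by
      show Ring.inverse (P t) = _
      rw [← huval t]
      exact Ring.inverse_unit (u t)
    exact h2.congr_deriv (by simp [h3, Function.comp])
  set U : ℝ → E →L[ℝ] E := fun t => P₁ t * Q t with hUdef
  have hUder : ∀ t, HasDerivAt U (P₂ t * Q t + P₁ t * -(Q t * P₁ t * Q t)) t :=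
    fun t => (hP₁der t).mul (hQder t)
  -- curvature operator as a continuous linear map
  set Rc : ℝ → E →L[ℝ] E := fun t => LinearMap.toContinuousLinearMap (R t) with hRc
  have hRc_apply : ∀ t x, Rc t x = R t x := fun t x => rfl
  -- the matrix Jacobi equation
  have hJacobi : ∀ i t, deriv (deriv (Jf i)) t = -(R t (Jf i t)) := by
    intro i t
    exact eq_neg_of_add_eq_zero_left ((hΛJacobi _ (hJmem i)).2 t)
  have hP₂R : ∀ t, P₂ t = -(Rc t * P t) := by
    intro t
    ext x
    rw [ContinuousLinearMap.neg_apply, ContinuousLinearMap.mul_apply, hRc_apply, hP_apply]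
    have hl : P₂ t x = ∑ i, ⟪b i, x⟫_ℝ • deriv (deriv (Jf i)) t := by
      simp [hP₂def, ContinuousLinearMap.sum_apply, hL_apply]
    rw [hl, map_sum, ← Finset.sum_neg_distrib]
    exact Finset.sum_congr rfl fun i _ => by rw [hJacobi i t, map_smul, smul_neg]
  set τ : (E →L[ℝ] E) →L[ℝ] ℝ :=
    ∑ i, (innerSL ℝ (b i)).comp (ContinuousLinearMap.apply ℝ E (b i)) with hτdef
  have hτ_apply : ∀ S : E →L[ℝ] E, τ S = ∑ i, ⟪b i, S (b i)⟫_ℝ := by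
    intro S
    simp [hτdef, ContinuousLinearMap.sum_apply, ContinuousLinearMap.comp_apply,
      ContinuousLinearMap.apply_apply]
  set φ : ℝ → ℝ := fun t => τ (U t) with hφdef
  have hφder : ∀ t, HasDerivAt φ (-(τ (Rc t)) - τ (U t * U t)) t := by
    intro t
    have h1 := (τ.hasFDerivAt).comp_hasDerivAt t (hUder t)
    have e1 : P₂ t * Q t = -(Rc t) := by
      rw [hP₂R t, neg_mul, mul_assoc, hPQ t, mul_one]
    have e2 : P₁ t * -(Q t * P₁ t * Q t) = -(U t * U t) := by
      show _ = -((P₁ t * Q t) * (P₁ t * Q t))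
      noncomm_ring
    refine h1.congr_deriv ?_
    rw [map_add, e1, e2, map_neg, map_neg]
    ring
  have hUP : ∀ t (a : E), U t (P t a) = P₁ t a := by
    intro t a
    show (P₁ t) ((Q t) ((P t) a)) = _
    have hQPa : (Q t) ((P t) a) = a := by
      rw [← ContinuousLinearMap.mul_apply, hQP t, ContinuousLinearMap.one_apply]
    rw [hQPa]
  set Jc : E → Λ := fun a => ∑ i, ⟪b i, a⟫_ℝ • BΛ i with hJcdef
  have hJc_coe : ∀ a : E, ((Jc a : Λ) : ℝ → E) = fun s => ∑ i, ⟪b i, a⟫_ℝ • Jf i s :=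
    fun a => hcoe_sum _
  have hPJc : ∀ (a : E) (s : ℝ), P s a = ((Jc a : Λ) : ℝ → E) s := by
    intro a s; rw [hJc_coe, hP_apply]
  have hP₁Jc : ∀ (a : E) (s : ℝ), P₁ s a = deriv ((Jc a : Λ) : ℝ → E) s := by
    intro a s
    rw [hJc_coe, (hsum_deriv _ s).deriv, hP₁_apply]
  have hUsym : ∀ t (x y : E), ⟪U t x, y⟫_ℝ = ⟪x, U t y⟫_ℝ := by
    intro t x y
    obtain ⟨a, rfl⟩ := (hbij t).2 x
    obtain ⟨c, rfl⟩ := (hbij t).2 y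
    rw [hUP t a, hUP t c, hPJc a t, hPJc c t, hP₁Jc a t, hP₁Jc c t]
    exact hΛSA _ (Jc a).2 _ (Jc c).2 t
  have hτU2 : ∀ t, τ (U t * U t) = ∑ i, ‖U t (b i)‖ ^ 2 := by
    intro t
    rw [hτ_apply]
    refine Finset.sum_congr rfl fun i _ => ?_
    rw [ContinuousLinearMap.mul_apply, ← hUsym t (b i) (U t (b i)),
      real_inner_self_eq_norm_sq]
  have hτR : ∀ t, 0 ≤ τ (Rc t) := by
    intro t
    rw [hτ_apply]
    exact Finset.sum_nonneg fun i _ => by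
      rw [hRc_apply, real_inner_comm]; exact hRnonneg t (b i)
  have hφ_eq : ∀ t, φ t = ∑ i, ⟪b i, U t (b i)⟫_ℝ := fun t => hτ_apply (U t)
  have hφdiff : Differentiable ℝ φ := fun t => (hφder t).differentiableAt
  have hnpos' : (0:ℝ) < (n:ℝ) := by exact_mod_cast hnpos
  have hineqφ : ∀ t, deriv φ t ≤ -(φ t) ^ 2 / (n:ℝ) := by
    intro t
    rw [(hφder t).deriv]
    have h1 : (φ t) ^ 2 ≤ (n:ℝ) * ∑ i, ⟪b i, U t (b i)⟫_ℝ ^ 2 := by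
      rw [hφ_eq]
      have h := sq_sum_le_card_mul_sum_sq
        (s := (Finset.univ : Finset (Fin n))) (f := fun i => ⟪b i, U t (b i)⟫_ℝ)
      simpa using h
    have h2 : ∀ i, ⟪b i, U t (b i)⟫_ℝ ^ 2 ≤ ‖U t (b i)‖ ^ 2 := by
      intro i
      have hcs := abs_real_inner_le_norm (b i) (U t (b i))
      have hb1 : ‖b i‖ = 1 := b.orthonormal.1 i
      calc ⟪b i, U t (b i)⟫_ℝ ^ 2 = |⟪b i, U t (b i)⟫_ℝ| ^ 2 := (sq_abs _).symm
        _ ≤ (‖b i‖ * ‖U t (b i)‖) ^ 2 := by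
            exact pow_le_pow_left₀ (abs_nonneg _) hcs 2
        _ = ‖U t (b i)‖ ^ 2 := by rw [hb1, one_mul]
    have h3 : (φ t) ^ 2 ≤ (n:ℝ) * τ (U t * U t) := by
      rw [hτU2]
      exact h1.trans (mul_le_mul_of_nonneg_left
        (Finset.sum_le_sum fun i _ => h2 i) (Nat.cast_nonneg n))
    have h5 : (φ t) ^ 2 / (n:ℝ) ≤ τ (U t * U t) := by
      rw [div_le_iff₀ hnpos']
      nlinarith [h3]
    rw [neg_div]
    linarith [hτR t, h5]
  have hφ0 : ∀ t, φ t = 0 := riccati_global_zero hnpos' hφdiff hineqφ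
  have hderiv0 : ∀ t, -(τ (Rc t)) - τ (U t * U t) = 0 := by
    intro t
    rw [← (hφder t).deriv]
    have hφfun : φ = fun _ => (0:ℝ) := funext hφ0
    rw [hφfun]
    simp
  have hτU2nn : ∀ t, 0 ≤ τ (U t * U t) := by
    intro t
    rw [hτU2]
    positivity
  have hτU2_0 : ∀ t, τ (U t * U t) = 0 := fun t => by
    linarith [hderiv0 t, hτR t, hτU2nn t]
  have hτR0 : ∀ t, τ (Rc t) = 0 := fun t => by
    linarith [hderiv0 t, hτR t, hτU2nn t, hτU2_0 t]
  have hUb0 : ∀ t i, U t (b i) = 0 := by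
    intro t i
    have hsum : ∑ i, ‖U t (b i)‖ ^ 2 = 0 := by rw [← hτU2]; exact hτU2_0 t
    have hterm := (Finset.sum_eq_zero_iff_of_nonneg
      (fun i _ => sq_nonneg ‖U t (b i)‖)).mp hsum i (Finset.mem_univ i)
    have hnorm : ‖U t (b i)‖ = 0 := by nlinarith [norm_nonneg (U t (b i))]
    exact norm_eq_zero.mp hnorm
  have hU0 : ∀ t, U t = (0 : E →L[ℝ] E) := by
    intro t
    ext y
    conv_lhs => rw [← b.sum_repr y]
    rw [map_sum]
    simp [map_smul, hUb0 t]
  have hP₁0 : ∀ t, P₁ t = (0 : E →L[ℝ] E) := by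
    intro t
    have hstep : P₁ t = U t * P t := by
      show P₁ t = (P₁ t * Q t) * P t
      rw [mul_assoc, hQP t, mul_one]
    rw [hstep, hU0 t, zero_mul]
  constructor
  · intro J hJ t
    set c : Fin n → ℝ := fun i => BΛ.repr ⟨J, hJ⟩ i with hc
    have hJrepr : (⟨J, hJ⟩ : Λ) = ∑ i, c i • BΛ i := (BΛ.sum_repr ⟨J, hJ⟩).symm
    have hJfun : J = fun s => ∑ i, c i • Jf i s := by
      have h : J = ((∑ i, c i • BΛ i : Λ) : ℝ → E) :=
        congrArg (fun v : Λ => (v : ℝ → E)) hJrepr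
      rw [hcoe_sum] at h
      exact h
    rw [hJfun, (hsum_deriv c t).deriv]
    refine Finset.sum_eq_zero fun i _ => ?_
    have hone : ∀ j, ⟪b j, b i⟫_ℝ = if j = i then (1:ℝ) else 0 :=
      fun j => orthonormal_iff_ite.mp b.orthonormal j i
    have h1 : P₁ t (b i) = deriv (Jf i) t := by
      rw [hP₁_apply]
      simp only [hone, ite_smul, one_smul, zero_smul]
      simp
    have hJf0 : deriv (Jf i) t = 0 := by
      rw [← h1, hP₁0 t, ContinuousLinearMap.zero_apply]
    rw [hJf0, smul_zero]
  · intro t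
    have hRb0 : ∀ i, R t (b i) = 0 := by
      intro i
      have hsum : ∑ i, ⟪b i, R t (b i)⟫_ℝ = 0 := by
        have h := hτR0 t
        rw [hτ_apply] at h
        simpa [hRc_apply] using h
      have hterm := (Finset.sum_eq_zero_iff_of_nonneg (fun i _ => by
        rw [real_inner_comm]; exact hRnonneg t (b i))).mp hsum i (Finset.mem_univ i)
      refine psd_apply_eq_zero (R t) (hRsymm t) (hRnonneg t) ?_
      rw [real_inner_comm]
      exact hterm
    ext x
    conv_lhs => rw [← b.sum_repr x]
    rw [map_sum]
    simp [map_smul, hRb0]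
end

section
/- The two summands in the decomposition of Corollary B are pointwise orthogonal: Assume Λ is a self-adjoint subspace of Jacobi fields. If J₁ lies in span{J ∈ Λ : J(t₀) = 0 for some t₀ ∈ ℝ} and J₂ ∈ Λ satisfies J₂'(t) = 0 for all t ∈ ℝ (J₂ is parallel), then ⟨J₁(t), J₂(t)⟩ = 0 for all t ∈ ℝ. -/
open scoped InnerProductSpace

/-- The two summands in the decomposition of Corollary B are pointwise orthogonal:
a Jacobi field in the span of those vanishing somewhere is pointwise orthogonal to every
parallel Jacobi field of the family. -/
theorem decomposition_pointwise_orthogonal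
    {E : Type*} [NormedAddCommGroup E] [InnerProductSpace ℝ E] [FiniteDimensional ℝ E]
    (R : ℝ → (E →ₗ[ℝ] E))
    (hRsmooth : ∀ v : E, ContDiff ℝ (⊤ : ℕ∞) (fun t => R t v))
    (hRsymm : ∀ t : ℝ, (R t).IsSymmetric)
    -- Λ is a subspace of Jacobi fields
    (Λ : Submodule ℝ (ℝ → E))
    (hΛJacobi : ∀ J ∈ Λ, ContDiff ℝ (⊤ : ℕ∞) J ∧ ∀ t : ℝ, deriv (deriv J) t + R t (J t) = 0)
    -- Λ has self-adjoint Riccati operator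
    (hΛSA : ∀ J₁ ∈ Λ, ∀ J₂ ∈ Λ, ∀ t : ℝ,
      ⟪deriv J₁ t, J₂ t⟫_ℝ = ⟪J₁ t, deriv J₂ t⟫_ℝ)
    (J₁ : ℝ → E)
    (hJ₁ : J₁ ∈ Submodule.span ℝ {J : ℝ → E | J ∈ Λ ∧ ∃ t₀ : ℝ, J t₀ = 0})
    (J₂ : ℝ → E) (hJ₂ : J₂ ∈ Λ) (hJ₂par : ∀ t : ℝ, deriv J₂ t = 0) :
    ∀ t : ℝ, ⟪J₁ t, J₂ t⟫_ℝ = 0 := by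
  induction hJ₁ using Submodule.span_induction with
  | mem J hJ =>
    obtain ⟨hJΛ, t₀, ht₀⟩ := hJ
    have hJd : Differentiable ℝ J := (hΛJacobi J hJΛ).1.differentiable (by simp)
    have hJ₂d : Differentiable ℝ J₂ := (hΛJacobi J₂ hJ₂).1.differentiable (by simp)
    have hder : ∀ t, deriv (fun t => ⟪J t, J₂ t⟫_ℝ) t = 0 := by
      intro t
      rw [deriv_inner_apply (𝕜 := ℝ) (hJd t) (hJ₂d t), hJ₂par t, hΛSA J hJΛ J₂ hJ₂ t,
        hJ₂par t]
      simp
    have hconst : ∀ t, ⟪J t, J₂ t⟫_ℝ = ⟪J t₀, J₂ t₀⟫_ℝ := fun t =>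
      is_const_of_deriv_eq_zero (fun x => ((hJd x).inner ℝ (hJ₂d x))) hder t t₀
    intro t
    rw [hconst t, ht₀, inner_zero_left]
  | zero => intro t; simp
  | add J K _ _ hJ hK => intro t; simpa [inner_add_left] using by rw [hJ t, hK t, add_zero]
  | smul c J _ hJ => intro t; simp [real_inner_smul_left, hJ t]
end

section
/- Degenerate times of a self-adjoint family of Jacobi fields are isolated: Let V be a self-adjoint subspace of Jacobi fields. Then the set {t ∈ ℝ : J(t) = 0 for some nonzero J ∈ V} is discrete in ℝ (it has no accumulation point); equivalently, the set of times at which the evaluation map V → E, J ↦ J(t), fails to be injective is discrete. In particular, for a subspace V ⊆ Λ of a self-adjoint family Λ, the 'derivative summand' {J'(t) : J ∈ V, J(t) = 0} of the vertical space vanishes for all but a discrete set of t. -/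
open Set Filter Topology

open scoped InnerProductSpace

section auxiliary

section aux
variable {F : Type*} [NormedAddCommGroup F] [NormedSpace ℝ F]

lemma gronwall_zero_forward {x x' : ℝ → F} (hd : ∀ t, HasDerivAt x (x' t) t)
    (hb : ∀ a c : ℝ, ∃ K, ∀ t ∈ Set.Icc a c, ‖x' t‖ ≤ K * ‖x t‖)
    {t₀ : ℝ} (h0 : x t₀ = 0) {c : ℝ} (hc : t₀ ≤ c) : x c = 0 := by
  obtain ⟨K, hK⟩ := hb t₀ c
  have hcont : ContinuousOn x (Set.Icc t₀ c) :=
    (fun t _ => ((hd t).differentiableAt.continuousAt).continuousWithinAt)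
  have h := norm_le_gronwallBound_of_norm_deriv_right_le (f := x) (f' := x') (δ := 0) (K := K)
    (ε := 0) (a := t₀) (b := c) hcont (fun t _ => (hd t).hasDerivWithinAt)
    (by simp [h0]) (fun t ht => by simpa using hK t (Set.Ico_subset_Icc_self ht))
  have h2 := h c (Set.right_mem_Icc.2 hc)
  rw [gronwallBound_ε0_δ0] at h2
  simpa using le_antisymm h2 (norm_nonneg _) |> norm_eq_zero.mp

lemma gronwall_zero {x x' : ℝ → F} (hd : ∀ t, HasDerivAt x (x' t) t)
    (hb : ∀ a c : ℝ, ∃ K, ∀ t ∈ Set.Icc a c, ‖x' t‖ ≤ K * ‖x t‖)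
    {t₀ : ℝ} (h0 : x t₀ = 0) : ∀ t, x t = 0 := by
  intro t
  rcases le_total t₀ t with h | h
  · exact gronwall_zero_forward hd hb h0 h
  · -- reflect
    set y : ℝ → F := fun s => x (2 * t₀ - s) with hy
    have hdy : ∀ s, HasDerivAt y ((-1 : ℝ) • x' (2 * t₀ - s)) s := by
      intro s
      have h1 : HasDerivAt (fun s : ℝ => 2 * t₀ - s) (-1) s := by
        simpa using (hasDerivAt_id s).const_sub (2 * t₀)
      exact (hd (2 * t₀ - s)).scomp s h1
    have hby : ∀ a c : ℝ, ∃ K, ∀ s ∈ Set.Icc a c, ‖(-1 : ℝ) • x' (2 * t₀ - s)‖ ≤ K * ‖y s‖ := by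
      intro a c
      obtain ⟨K, hK⟩ := hb (2 * t₀ - c) (2 * t₀ - a)
      refine ⟨K, fun s hs => ?_⟩
      have : 2 * t₀ - s ∈ Set.Icc (2 * t₀ - c) (2 * t₀ - a) :=
        ⟨by linarith [hs.2], by linarith [hs.1]⟩
      simpa using hK _ this
    have h0y : y t₀ = 0 := by simp [hy, two_mul, h0]
    have := gronwall_zero_forward hdy hby h0y (c := 2 * t₀ - t) (by linarith)
    simpa [hy] using this
end aux

lemma jacobi_eq_zero {E : Type*} [NormedAddCommGroup E] [NormedSpace ℝ E]
    [FiniteDimensional ℝ E]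
    (R : ℝ → (E →ₗ[ℝ] E)) (hRsmooth : ∀ v : E, ContDiff ℝ (⊤ : ℕ∞) (fun t => R t v))
    {J : ℝ → E} (hJ : ContDiff ℝ (⊤ : ℕ∞) J)
    (hJ'' : ∀ t : ℝ, deriv (deriv J) t + R t (J t) = 0)
    {t₀ : ℝ} (h0 : J t₀ = 0) (h1 : deriv J t₀ = 0) : ∀ t, J t = 0 := by
  set Rc : ℝ → (E →L[ℝ] E) := fun t => LinearMap.toContinuousLinearMap (R t) with hRc
  have hRcont : Continuous Rc :=
    continuous_clm_apply.mpr fun v => (hRsmooth v).continuous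
  have hJ2 : ContDiff ℝ ((⊤ : ℕ∞) : WithTop ℕ∞) J := hJ.of_le (by simp)
  have hJd : ContDiff ℝ ((⊤ : ℕ∞) : WithTop ℕ∞) (deriv J) := (contDiff_infty_iff_deriv.mp hJ2).2
  set x : ℝ → E × E := fun t => (J t, deriv J t) with hx
  set x' : ℝ → E × E := fun t => (deriv J t, -(R t (J t))) with hx'
  have hd : ∀ t, HasDerivAt x (x' t) t := by
    intro t
    have h2 : deriv (deriv J) t = -(R t (J t)) := eq_neg_of_add_eq_zero_left (hJ'' t)
    exact ((hJ.differentiable (by simp) t).hasDerivAt).prodMk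
      (h2 ▸ (hJd.differentiable (by simp) t).hasDerivAt)
  have hb : ∀ a c : ℝ, ∃ K, ∀ t ∈ Set.Icc a c, ‖x' t‖ ≤ K * ‖x t‖ := by
    intro a c
    obtain ⟨C, hC⟩ := (isCompact_Icc (a := a) (b := c)).exists_bound_of_continuousOn
      (hRcont.norm.continuousOn (s := Set.Icc a c))
    refine ⟨max C 0 + 1, fun t ht => ?_⟩
    have hxt : ‖x t‖ = max ‖J t‖ ‖deriv J t‖ := rfl
    have hK1 : (1 : ℝ) ≤ max C 0 + 1 := by simp [le_max_iff]
    have h1' : ‖deriv J t‖ ≤ (max C 0 + 1) * ‖x t‖ := by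
      calc ‖deriv J t‖ ≤ ‖x t‖ := by rw [hxt]; exact le_max_right _ _
        _ ≤ (max C 0 + 1) * ‖x t‖ := le_mul_of_one_le_left (norm_nonneg _) hK1
    have h2' : ‖-(R t (J t))‖ ≤ (max C 0 + 1) * ‖x t‖ := by
      rw [norm_neg]
      calc ‖R t (J t)‖ = ‖Rc t (J t)‖ := rfl
        _ ≤ ‖Rc t‖ * ‖J t‖ := (Rc t).le_opNorm _
        _ ≤ (max C 0 + 1) * ‖x t‖ := by
            apply mul_le_mul
            · exact by
                have := hC t ht
                rw [Real.norm_eq_abs, abs_of_nonneg (norm_nonneg _)] at this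
                calc ‖Rc t‖ ≤ C := this
                  _ ≤ max C 0 := le_max_left _ _
                  _ ≤ max C 0 + 1 := by linarith
            · rw [hxt]; exact le_max_left _ _
            · exact norm_nonneg _
            · positivity
    have : ‖x' t‖ = max ‖deriv J t‖ ‖-(R t (J t))‖ := rfl
    rw [this]
    exact max_le h1' h2'
  have h0x : x t₀ = 0 := by simp [hx, h0, h1, Prod.ext_iff]
  intro t
  have := gronwall_zero hd hb h0x t
  simpa [hx, Prod.ext_iff] using congrArg Prod.fst this

end auxiliary


/-- **Degenerate times of a self-adjoint family of Jacobi fields are isolated**: the set of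
times at which some nonzero Jacobi field of the family vanishes has no accumulation point
in `ℝ`. -/
theorem degenerate_times_discrete
    {E : Type*} [NormedAddCommGroup E] [InnerProductSpace ℝ E] [FiniteDimensional ℝ E]
    (R : ℝ → (E →ₗ[ℝ] E))
    (hRsmooth : ∀ v : E, ContDiff ℝ (⊤ : ℕ∞) (fun t => R t v))
    (hRsymm : ∀ t : ℝ, (R t).IsSymmetric)
    -- V is a subspace of Jacobi fields
    (V : Submodule ℝ (ℝ → E))
    (hVJacobi : ∀ J ∈ V, ContDiff ℝ (⊤ : ℕ∞) J ∧ ∀ t : ℝ, deriv (deriv J) t + R t (J t) = 0)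
    -- V has self-adjoint Riccati operator
    (hVSA : ∀ J₁ ∈ V, ∀ J₂ ∈ V, ∀ t : ℝ,
      ⟪deriv J₁ t, J₂ t⟫_ℝ = ⟪J₁ t, deriv J₂ t⟫_ℝ) :
    ∀ t : ℝ,
      ¬ AccPt t (Filter.principal {s : ℝ | ∃ J ∈ V, J ≠ 0 ∧ J s = 0}) := by
  intro t₀ hacc
  -- V is finite dimensional
  have hdiff : ∀ J : V, Differentiable ℝ (J : ℝ → E) :=
    fun J => ((hVJacobi J J.2).1).differentiable (by simp)
  have hzero : ∀ J : V, (J : ℝ → E) t₀ = 0 → deriv (J : ℝ → E) t₀ = 0 → J = 0 := by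
    intro J h0 h1
    have := jacobi_eq_zero R hRsmooth (hVJacobi J J.2).1 (hVJacobi J J.2).2 h0 h1
    exact Subtype.ext (funext this)
  let ι : V →ₗ[ℝ] E × E :=
    { toFun := fun J => ((J : ℝ → E) t₀, deriv (J : ℝ → E) t₀)
      map_add' := by
        intro J K
        have : deriv ((J : ℝ → E) + (K : ℝ → E)) t₀
            = deriv (J : ℝ → E) t₀ + deriv (K : ℝ → E) t₀ := by
          have h := deriv_add ((hdiff J) t₀) ((hdiff K) t₀)
          exact h
        simp only [Submodule.coe_add, Pi.add_apply, Prod.mk_add_mk, this]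
      map_smul' := by
        intro r J
        have : deriv (r • (J : ℝ → E)) t₀ = r • deriv (J : ℝ → E) t₀ := by
          have h := deriv_const_smul r ((hdiff J) t₀)
          exact h
        simp only [SetLike.val_smul, Pi.smul_apply, this, Prod.smul_mk, RingHom.id_apply] }
  have hinj : Function.Injective ι := by
    rw [injective_iff_map_eq_zero]
    intro J hJ
    rw [Prod.ext_iff] at hJ
    exact hzero J hJ.1 hJ.2
  haveI : FiniteDimensional ℝ V := FiniteDimensional.of_injective ι hinj
  -- extract a sequence of degenerate times
  rw [accPt_iff_nhds] at hacc
  have hseq : ∀ n : ℕ, ∃ u : ℝ, |u - t₀| < 1 / (n + 1) ∧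
      (∃ J ∈ V, J ≠ 0 ∧ J u = 0) ∧ u ≠ t₀ := by
    intro n
    obtain ⟨u, ⟨hu1, hu2⟩, hu3⟩ := hacc (Metric.ball t₀ (1 / (n + 1)))
      (Metric.ball_mem_nhds _ (by positivity))
    exact ⟨u, by simpa [Real.dist_eq] using hu1, hu2, hu3⟩
  choose s hs1 hs2 hs3 using hseq
  have hst : Filter.Tendsto s atTop (𝓝 t₀) := by
    rw [tendsto_iff_dist_tendsto_zero]
    refine squeeze_zero (fun n => dist_nonneg) (fun n => (le_of_lt ?_))
      tendsto_one_div_add_atTop_nhds_zero_nat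
    simpa [Real.dist_eq] using hs1 n
  have hJseq : ∀ n, ∃ J : V, J ≠ 0 ∧ (J : ℝ → E) (s n) = 0 := by
    intro n
    obtain ⟨J, hJV, hJ0, hJs⟩ := hs2 n
    exact ⟨⟨J, hJV⟩, fun h => hJ0 (by simpa using Subtype.ext_iff.mp h), hJs⟩
  choose Jseq hJne hJz using hJseq
  -- basis and normalization
  set k := Module.finrank ℝ V with hk
  let b : Module.Basis (Fin k) ℝ V := Module.finBasis ℝ V
  let e : V ≃ₗ[ℝ] (Fin k → ℝ) := b.equivFun
  let c : ℕ → (Fin k → ℝ) := fun n => e (Jseq n)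
  have hcne : ∀ n, c n ≠ 0 := by
    intro n h
    exact hJne n (by simpa [c] using (map_eq_zero_iff e e.injective).mp h)
  let y : ℕ → (Fin k → ℝ) := fun n => ‖c n‖⁻¹ • c n
  have hy : ∀ n, y n ∈ Metric.sphere (0 : Fin k → ℝ) 1 := by
    intro n
    simp [y, mem_sphere_zero_iff_norm, norm_smul, norm_inv, norm_norm,
      inv_mul_cancel₀ (norm_ne_zero_iff.mpr (hcne n))]
  obtain ⟨ylim, hylim, φ, hφ, hyconv⟩ :=
    (isCompact_sphere (0 : Fin k → ℝ) 1).tendsto_subseq hy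
  -- evaluation maps
  let bf : Fin k → (ℝ → E) := fun i => ((b i : V) : ℝ → E)
  have hbf : ∀ i, ContDiff ℝ (⊤ : ℕ∞) (bf i) := fun i => (hVJacobi _ (b i).2).1
  have hbfd : ∀ i, Continuous (deriv (bf i)) := fun i =>
    ((contDiff_infty_iff_deriv.mp ((hbf i).of_le (by simp))).2).continuous
  let Fev : ℝ × (Fin k → ℝ) → E := fun p => ∑ i, p.2 i • bf i p.1
  let Gev : ℝ × (Fin k → ℝ) → E := fun p => ∑ i, p.2 i • deriv (bf i) p.1
  have hFc : Continuous Fev := continuous_finset_sum _ fun i _ =>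
    ((continuous_apply i).comp continuous_snd).smul ((hbf i).continuous.comp continuous_fst)
  have hGc : Continuous Gev := continuous_finset_sum _ fun i _ =>
    ((continuous_apply i).comp continuous_snd).smul ((hbfd i).comp continuous_fst)
  have hA : ∀ (w : Fin k → ℝ) (t : ℝ), ((e.symm w : V) : ℝ → E) t = Fev (t, w) := by
    intro w t
    have h1 : (e.symm w : V) = ∑ i, w i • b i := b.equivFun_symm_apply w
    rw [h1]
    have h2 : ((∑ i, w i • b i : V) : ℝ → E) = ∑ i, w i • bf i := by
      push_cast
      rfl
    rw [h2]
    simp [Fev, Finset.sum_apply]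
  have hB : ∀ (w : Fin k → ℝ) (t : ℝ),
      HasDerivAt ((e.symm w : V) : ℝ → E) (Gev (t, w)) t := by
    intro w t
    have h1 : HasDerivAt (fun u => ∑ i, w i • bf i u) (∑ i, w i • deriv (bf i) t) t := by
      apply HasDerivAt.fun_sum
      intro i _
      exact (((hbf i).differentiable (by simp) t).hasDerivAt).const_smul (w i)
    have h2 : ((e.symm w : V) : ℝ → E) = fun u => ∑ i, w i • bf i u := by
      funext u
      rw [hA w u]
    rw [h2]
    exact h1
  -- limit Jacobi field
  set Jlim : V := e.symm ylim with hJlim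
  have hylimne : ylim ≠ 0 := by
    intro h
    rw [mem_sphere_zero_iff_norm] at hylim
    simp [h] at hylim
  have hJlimne : Jlim ≠ 0 := fun h => hylimne ((map_eq_zero_iff e.symm e.symm.injective).mp h)
  -- the rescaled sequence
  have hK0 : ∀ n, ((e.symm (y (φ n)) : V) : ℝ → E) (s (φ n)) = 0 := by
    intro n
    have h1 : e.symm (y (φ n)) = ‖c (φ n)‖⁻¹ • Jseq (φ n) := by
      simp only [y, map_smul, c, LinearEquiv.symm_apply_apply]
    rw [h1]
    have : ((‖c (φ n)‖⁻¹ • Jseq (φ n) : V) : ℝ → E) (s (φ n))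
        = ‖c (φ n)‖⁻¹ • ((Jseq (φ n) : ℝ → E) (s (φ n))) := rfl
    rw [this, hJz (φ n), smul_zero]
  have hsφ : Filter.Tendsto (fun n => s (φ n)) atTop (𝓝 t₀) := hst.comp hφ.tendsto_atTop
  -- Jlim vanishes at t₀
  have hJlim0 : ((Jlim : V) : ℝ → E) t₀ = 0 := by
    have h1 : Filter.Tendsto (fun n => Fev (s (φ n), y (φ n))) atTop (𝓝 (Fev (t₀, ylim))) :=
      (hFc.tendsto _).comp (hsφ.prodMk_nhds hyconv)
    have h2 : (fun n => Fev (s (φ n), y (φ n))) = fun _ => (0 : E) := by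
      funext n
      rw [← hA (y (φ n)) (s (φ n))]
      exact hK0 n
    rw [h2] at h1
    rw [hA ylim t₀]
    exact (tendsto_nhds_unique tendsto_const_nhds h1).symm
  set w : E := Gev (t₀, ylim) with hw
  have hwderiv : deriv ((Jlim : V) : ℝ → E) t₀ = w := (hB ylim t₀).deriv
  -- Rolle argument
  have hg0 : ∀ n, ⟪((e.symm (y (φ n)) : V) : ℝ → E) t₀, w⟫_ℝ = 0 := by
    intro n
    rw [real_inner_comm, ← hwderiv]
    rw [hVSA _ Jlim.2 _ (e.symm (y (φ n))).2 t₀]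
    rw [hJlim0, inner_zero_left]
  have hrolle : ∀ n, ∃ σ : ℝ, |σ - t₀| ≤ |s (φ n) - t₀| ∧ ⟪Gev (σ, y (φ n)), w⟫_ℝ = 0 := by
    intro n
    set Kf : ℝ → E := ((e.symm (y (φ n)) : V) : ℝ → E) with hKf
    have hz0 : ⟪Kf (s (φ n)), w⟫_ℝ = 0 := by rw [hKf, hK0 n, inner_zero_left]
    have hz1 : ⟪Kf t₀, w⟫_ℝ = 0 := hg0 n
    have hder : ∀ u : ℝ, HasDerivAt (fun v => ⟪Kf v, w⟫_ℝ) (⟪Gev (u, y (φ n)), w⟫_ℝ) u := by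
      intro u
      have := (hB (y (φ n)) u).inner ℝ (hasDerivAt_const u w)
      simpa using this
    have hcont : ∀ a c' : ℝ, ContinuousOn (fun v => ⟪Kf v, w⟫_ℝ) (Set.Icc a c') :=
      fun a c' => Continuous.continuousOn
        (continuous_inner.comp (((hdiff _).continuous).prodMk continuous_const))
    have hne := hs3 (φ n)
    rcases lt_or_gt_of_ne hne with hlt | hgt
    · obtain ⟨σ, hσ1, hσ2⟩ := exists_hasDerivAt_eq_zero hlt (hcont _ _)
        (hz0.trans hz1.symm) (fun u _ => hder u)
      refine ⟨σ, ?_, hσ2⟩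
      rw [abs_of_nonpos (by linarith [hσ1.2] : σ - t₀ ≤ 0),
        abs_of_nonpos (by linarith : s (φ n) - t₀ ≤ 0)]
      linarith [hσ1.1]
    · obtain ⟨σ, hσ1, hσ2⟩ := exists_hasDerivAt_eq_zero hgt (hcont _ _)
        (hz1.trans hz0.symm) (fun u _ => hder u)
      refine ⟨σ, ?_, hσ2⟩
      rw [abs_of_nonneg (by linarith [hσ1.1] : (0:ℝ) ≤ σ - t₀),
        abs_of_nonneg (by linarith : (0:ℝ) ≤ s (φ n) - t₀)]
      linarith [hσ1.2]
  choose σ hσ1 hσ2 using hrolle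
  have hσt : Filter.Tendsto σ atTop (𝓝 t₀) := by
    rw [tendsto_iff_dist_tendsto_zero]
    have hd : Filter.Tendsto (fun n => dist (s (φ n)) t₀) atTop (𝓝 0) :=
      tendsto_iff_dist_tendsto_zero.mp hsφ
    exact squeeze_zero (fun n => dist_nonneg)
      (fun n => by simpa [Real.dist_eq] using hσ1 n) hd
  have hHc : Continuous (fun p : ℝ × (Fin k → ℝ) => ⟪Gev p, w⟫_ℝ) :=
    continuous_inner.comp (hGc.prodMk continuous_const)
  have h1 : Filter.Tendsto (fun n => ⟪Gev (σ n, y (φ n)), w⟫_ℝ) atTop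
      (𝓝 (⟪Gev (t₀, ylim), w⟫_ℝ)) :=
    (hHc.tendsto _).comp (hσt.prodMk_nhds hyconv)
  have h2 : (fun n => ⟪Gev (σ n, y (φ n)), w⟫_ℝ) = fun _ => (0 : ℝ) := funext hσ2
  rw [h2] at h1
  have hww : ⟪w, w⟫_ℝ = 0 := by
    have := tendsto_nhds_unique tendsto_const_nhds h1
    rw [← hw] at this
    exact this.symm
  have hw0 : w = 0 := inner_self_eq_zero.mp hww
  exact hJlimne (hzero Jlim hJlim0 (hwderiv.trans hw0))
end

section
/- Derivative of a ∇⊥-parallel horizontal field (equation (1), second part): Let X : I → E be a smooth map with P(t)(X(t)) = X(t) and P(t)(X'(t)) = 0 for all t ∈ I (a horizontal field that is parallel for the induced covariant derivative ∇⊥X(t) = P(t)(X'(t))). Then X'(t) = −A_t*(X(t)) for all t ∈ I; in particular X'(t) = −(id − P(t))(L(t)(X(t))). -/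
open scoped InnerProductSpace

/-- **Derivative of a `∇⊥`-parallel horizontal field** (equation (1), second part):
a horizontal field `X` along the geodesic that is parallel for the induced covariant
derivative satisfies `X'(t) = −A_t*(X(t)) = −(id − P(t))(L(t)(X(t)))` on `I`. -/
theorem deriv_of_parallel_horizontal_field
    {E : Type*} [NormedAddCommGroup E] [InnerProductSpace ℝ E] [FiniteDimensional ℝ E]
    (R : ℝ → (E →ₗ[ℝ] E))
    (hRsmooth : ∀ v : E, ContDiff ℝ (⊤ : ℕ∞) (fun t => R t v))
    (hRsymm : ∀ t : ℝ, (R t).IsSymmetric)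
    -- Λ is a subspace of Jacobi fields
    (Λ : Submodule ℝ (ℝ → E))
    (hΛJacobi : ∀ J ∈ Λ, ContDiff ℝ (⊤ : ℕ∞) J ∧ ∀ t : ℝ, deriv (deriv J) t + R t (J t) = 0)
    -- Λ has self-adjoint Riccati operator
    (hΛSA : ∀ J₁ ∈ Λ, ∀ J₂ ∈ Λ, ∀ t : ℝ,
      ⟪deriv J₁ t, J₂ t⟫_ℝ = ⟪J₁ t, deriv J₂ t⟫_ℝ)
    (hdim : Module.finrank ℝ Λ = Module.finrank ℝ E)
    -- I is an open interval on which the evaluation maps are isomorphisms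
    (I : Set ℝ) (hIopen : IsOpen I) (hIconn : I.OrdConnected)
    (hEval : ∀ t ∈ I, Function.Bijective (fun J : Λ => (J : ℝ → E) t))
    -- the Riccati operator L
    (L : ℝ → (E →ₗ[ℝ] E))
    (hL : ∀ t ∈ I, ∀ J ∈ Λ, L t (J t) = deriv J t)
    -- a subspace V ⊆ Λ, and P(t) the orthogonal projection onto V(t)ᗮ
    (V : Submodule ℝ (ℝ → E)) (hVΛ : V ≤ Λ)
    (P : ℝ → (E →ₗ[ℝ] E))
    (hP : ∀ t ∈ I, ∀ v : E,
      P t v ∈ (V.map (LinearMap.proj t))ᗮ ∧ v - P t v ∈ V.map (LinearMap.proj t))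
    -- a smooth horizontal field X along the geodesic that is ∇⊥-parallel
    (X : ℝ → E) (hXsmooth : ContDiffOn ℝ (⊤ : ℕ∞) X I)
    (hXhor : ∀ t ∈ I, P t (X t) = X t)
    (hXpar : ∀ t ∈ I, P t (deriv X t) = 0) :
    ∀ t ∈ I, deriv X t = -((LinearMap.id - P t : E →ₗ[ℝ] E) (L t (X t))) := by
  intro t ht
  set Vt := V.map (LinearMap.proj t : (ℝ → E) →ₗ[ℝ] E) with hVt
  set w : E := deriv X t + (L t (X t) - P t (L t (X t))) with hw
  -- X is differentiable at t
  have hXdiff : DifferentiableAt ℝ X t :=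
    ((hXsmooth.contDiffAt (hIopen.mem_nhds ht)).differentiableAt (by simp))
  -- w belongs to V(t)
  have hderivXmem : deriv X t ∈ Vt := by
    have h := (hP t ht (deriv X t)).2
    rwa [hXpar t ht, sub_zero] at h
  have hwmem : w ∈ Vt := Vt.add_mem hderivXmem (hP t ht (L t (X t))).2
  -- w is orthogonal to V(t)
  have horth : ∀ u ∈ Vt, ⟪w, u⟫_ℝ = 0 := by
    rintro u ⟨J, hJV, rfl⟩
    have hJΛ : J ∈ Λ := hVΛ hJV
    have hJdiff : Differentiable ℝ J := (hΛJacobi J hJΛ).1.differentiable (by simp)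
    -- ⟪X s, J s⟫ = 0 for s ∈ I
    have hperp : ∀ s ∈ I, ⟪X s, J s⟫_ℝ = 0 := by
      intro s hs
      have hXmem : X s ∈ (V.map (LinearMap.proj s))ᗮ := by
        rw [← hXhor s hs]; exact (hP s hs (X s)).1
      have hJmem : J s ∈ V.map (LinearMap.proj s : (ℝ → E) →ₗ[ℝ] E) := ⟨J, hJV, rfl⟩
      exact (Submodule.inner_left_of_mem_orthogonal hJmem hXmem)
    -- derivative of the constant function 0
    have hderiv0 : deriv (fun s => ⟪X s, J s⟫_ℝ) t = 0 := by
      have hEq : (fun s => ⟪X s, J s⟫_ℝ) =ᶠ[nhds t] (fun _ => (0 : ℝ)) := by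
        filter_upwards [hIopen.mem_nhds ht] with s hs using hperp s hs
      rw [hEq.deriv_eq, deriv_const]
    have hprod : deriv (fun s => ⟪X s, J s⟫_ℝ) t
        = ⟪X t, deriv J t⟫_ℝ + ⟪deriv X t, J t⟫_ℝ :=
      deriv_inner_apply (𝕜 := ℝ) hXdiff (hJdiff t)
    -- L is symmetric at t (via surjectivity of evaluation)
    obtain ⟨J₂, hJ₂⟩ := (hEval t ht).2 (X t)
    have hsym : ⟪X t, L t (J t)⟫_ℝ = ⟪L t (X t), J t⟫_ℝ := by
      have h1 : L t ((J₂ : ℝ → E) t) = deriv (J₂ : ℝ → E) t := hL t ht _ J₂.2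
      have h2 : L t (J t) = deriv J t := hL t ht J hJΛ
      rw [← hJ₂] at *
      simp only at h1 h2 ⊢
      rw [h1, h2, ← hΛSA (J₂ : ℝ → E) J₂.2 J hJΛ t]
    have hLJ : L t (J t) = deriv J t := hL t ht J hJΛ
    -- P t (L t (X t)) ⟂ J t
    have hPL : ⟪P t (L t (X t)), J t⟫_ℝ = 0 := by
      rw [real_inner_comm]
      exact Submodule.inner_right_of_mem_orthogonal (K := V.map (LinearMap.proj t : (ℝ → E) →ₗ[ℝ] E)) ⟨J, hJV, rfl⟩ (hP t ht (L t (X t))).1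
    have key : ⟪deriv X t, J t⟫_ℝ = -⟪L t (X t), J t⟫_ℝ := by
      have := hderiv0.symm.trans hprod
      rw [← hLJ, hsym] at this
      linarith
    simp only [hw, LinearMap.proj_apply, inner_add_left, inner_sub_left, key, hPL]
    ring
  -- w ∈ V(t) ∩ V(t)ᗮ = 0
  have hw0 : w = 0 := by
    have := horth w hwmem
    exact inner_self_eq_zero.mp this
  have : deriv X t = -(L t (X t) - P t (L t (X t))) := by
    rw [hw] at hw0; linear_combination (norm := module) hw0
  simpa using this
end

section
/- Scalar Riccati comparison on the whole line: If u : ℝ → ℝ is differentiable and satisfies u'(t) + u(t)² ≤ 0 for all t ∈ ℝ, then u(t) = 0 for all t ∈ ℝ. -/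
lemma riccati_aux (u : ℝ → ℝ) (hu : Differentiable ℝ u)
    (hRiccati : ∀ t : ℝ, deriv u t + u t ^ 2 ≤ 0) (t₀ : ℝ) (h0 : u t₀ < 0) : False := by
  have hanti : Antitone u := by
    apply antitone_of_deriv_nonpos hu
    intro x
    nlinarith [hRiccati x, sq_nonneg (u x)]
  have hneg : ∀ t ∈ Set.Ici t₀, u t < 0 := fun t ht => lt_of_le_of_lt (hanti ht) h0
  set φ : ℝ → ℝ := fun t => (u t)⁻¹ - t with hφ
  have hder : ∀ t ∈ Set.Ici t₀, HasDerivAt φ (-(deriv u t) / u t ^ 2 - 1) t := by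
    intro t ht
    exact (((hu t).hasDerivAt.inv (hneg t ht).ne)).sub (hasDerivAt_id t)
  have hmono : MonotoneOn φ (Set.Ici t₀) := by
    apply monotoneOn_of_deriv_nonneg (convex_Ici t₀)
    · exact ContinuousOn.sub ((hu.continuous.continuousOn).inv₀ fun t ht => (hneg t ht).ne) continuousOn_id
    · intro t ht
      rw [interior_Ici] at ht
      exact (hder t (Set.Ioi_subset_Ici_self ht)).differentiableAt.differentiableWithinAt
    · intro t ht
      rw [interior_Ici] at ht
      rw [(hder t (Set.Ioi_subset_Ici_self ht)).deriv]
      have h1 : u t < 0 := hneg t (Set.Ioi_subset_Ici_self ht)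
      have h2 : deriv u t + u t ^ 2 ≤ 0 := hRiccati t
      rw [sub_nonneg, le_div_iff₀ (by nlinarith)]
      nlinarith
  set t₁ : ℝ := t₀ + 1 - (u t₀)⁻¹ with ht₁
  have hle : t₀ ≤ t₁ := by
    have h2 : (u t₀)⁻¹ < 0 := inv_lt_zero.mpr h0
    rw [ht₁]; linarith
  have := hmono (Set.self_mem_Ici) (Set.mem_Ici.mpr hle) hle
  have h1 : (u t₁)⁻¹ < 0 := inv_lt_zero.mpr (hneg t₁ hle)
  simp only [hφ] at this
  linarith

/-- **Scalar Riccati comparison on the whole line**: a differentiable solution of the Riccati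
inequality `u' + u² ≤ 0` that is defined on all of `ℝ` vanishes identically. -/
theorem scalar_riccati_comparison
    (u : ℝ → ℝ) (hu : Differentiable ℝ u)
    (hRiccati : ∀ t : ℝ, deriv u t + u t ^ 2 ≤ 0) :
    ∀ t : ℝ, u t = 0 := by
  intro t
  by_contra hne
  rcases lt_or_gt_of_ne hne with h | h
  · exact riccati_aux u hu hRiccati t h
  · set v : ℝ → ℝ := fun s => -u (-s) with hv
    have hvd : ∀ s : ℝ, HasDerivAt v (deriv u (-s)) s := by
      intro s
      have := ((hu (-s)).hasDerivAt.comp s (hasDerivAt_neg s)).neg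
      simp at this; exact this
    have hvR : ∀ s : ℝ, deriv v s + v s ^ 2 ≤ 0 := by
      intro s
      rw [(hvd s).deriv]
      have := hRiccati (-s)
      simp only [hv]
      nlinarith
    exact riccati_aux v (fun s => (hvd s).differentiableAt) hvR (-t) (by simp [hv]; linarith)
end
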